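/- arXiv:2305.08539 — 9 statements merged into one kernel-verified Lean document; each statement's English description precedes it below -/
import Mathlib

section
/- Let q > 0 and define 𝔤(w,k) := q ∫_k^w |s|^{q−1}(s−k) ds for w, k ∈ ℝ. There exists a constant γ = γ(q) > 0 such that for all a, b ∈ ℝ one has γ⁻¹ (|a| + |b|)^{q−1} |a − b|² ≤ 𝔤(a,b) ≤ γ (|a| + |b|)^{q−1} |a − b|², with the convention that all quantities are zero when a = b = 0. -/
open MeasureTheory intervalIntegral Set Real

lemma absRpow_intInt {r : ℝ} (hr : -1 < r) (a b : ℝ) :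
    IntervalIntegrable (fun s : ℝ => |s| ^ r) volume a b := by
  suffices h : ∀ c : ℝ, IntervalIntegrable (fun s : ℝ => |s| ^ r) volume 0 c from
    (h a).symm.trans (h b)
  have hpos : ∀ c : ℝ, 0 ≤ c → IntervalIntegrable (fun s : ℝ => |s| ^ r) volume 0 c := by
    intro c hc
    have h1 := intervalIntegrable_rpow' (a := 0) (b := c) hr
    rw [intervalIntegrable_iff, uIoc_of_le hc] at h1 ⊢
    exact h1.congr_fun (fun x hx => by rw [abs_of_pos hx.1]) measurableSet_Ioc
  intro c
  rcases le_total 0 c with hc | hc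
  · exact hpos c hc
  · rw [IntervalIntegrable.iff_comp_neg]
    simp only [abs_neg, neg_zero]
    exact hpos (-c) (by linarith)

lemma phi_cont {q : ℝ} (hq : 0 < q) : Continuous (fun s : ℝ => |s| ^ (q - 1) * s) := by
  rw [continuous_iff_continuousAt]
  intro x
  rcases eq_or_ne x 0 with rfl | hx
  · have hb : ∀ s : ℝ, ‖|s| ^ (q - 1) * s‖ ≤ |s| ^ q := by
      intro s
      rcases eq_or_ne s 0 with rfl | hs
      · simp [Real.zero_rpow hq.ne']
      · rw [norm_mul, Real.norm_eq_abs, Real.norm_eq_abs,           abs_of_nonneg (Real.rpow_nonneg (abs_nonneg s) _)]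
        calc |s| ^ (q - 1) * |s| = |s| ^ (q - 1 + 1) :=
              (Real.rpow_add_one (abs_ne_zero.2 hs) (q - 1)).symm
          _ = |s| ^ q := by norm_num
          _ ≤ |s| ^ q := le_rfl
    have ht : ContinuousAt (fun s : ℝ => |s| ^ q) 0 :=
      ContinuousAt.rpow_const continuous_abs.continuousAt (Or.inr hq.le)
    have ht' : Filter.Tendsto (fun s : ℝ => |s| ^ q) (nhds 0) (nhds 0) := by
      simpa [ContinuousAt, Real.zero_rpow hq.ne'] using ht
    have := squeeze_zero_norm hb ht'
    simpa [ContinuousAt] using this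
  · exact (ContinuousAt.rpow_const continuous_abs.continuousAt
      (Or.inl (abs_ne_zero.2 hx))).mul continuousAt_id

lemma phi_deriv {q : ℝ} (hq : 0 < q) {x : ℝ} (hx : x ≠ 0) :
    HasDerivAt (fun s : ℝ => |s| ^ (q - 1) * s / q) (|x| ^ (q - 1)) x := by
  rcases hx.lt_or_gt with hneg | hpos
  · have h1 : HasDerivAt (fun s : ℝ => (-s) ^ q) (q * (-x) ^ (q - 1) * (-1)) x :=
      (Real.hasDerivAt_rpow_const (x := -x) (p := q)
        (Or.inl (neg_pos.2 hneg).ne')).comp x (hasDerivAt_neg x)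
    have h2 := (h1.neg).div_const q
    have h3 : -(q * (-x) ^ (q - 1) * (-1)) / q = |x| ^ (q - 1) := by
      rw [abs_of_neg hneg]; field_simp
    rw [h3] at h2
    apply h2.congr_of_eventuallyEq
    filter_upwards [Iio_mem_nhds hneg] with s hs
    have h4 : (-s : ℝ) ^ q = (-s) ^ (q - 1) * (-s) := by
      rw [← Real.rpow_add_one (neg_ne_zero.2 hs.ne) (q - 1)]; norm_num
    rw [abs_of_neg hs, Pi.neg_apply, h4]; ring
  · have h1 : HasDerivAt (fun s : ℝ => s ^ q) (q * x ^ (q - 1)) x :=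
      Real.hasDerivAt_rpow_const (Or.inl hpos.ne')
    have h2 := h1.div_const q
    have h3 : q * x ^ (q - 1) / q = |x| ^ (q - 1) := by
      rw [abs_of_pos hpos]; field_simp
    rw [h3] at h2
    apply h2.congr_of_eventuallyEq
    filter_upwards [Ioi_mem_nhds hpos] with s hs
    have h4 : (s : ℝ) ^ q = s ^ (q - 1) * s := by
      rw [← Real.rpow_add_one hs.ne' (q - 1)]; norm_num
    rw [abs_of_pos hs, h4]

lemma absRpow_integral {q : ℝ} (hq : 0 < q) {b a : ℝ} (hba : b ≤ a) :
    ∫ s in b..a, |s| ^ (q - 1) = (|a| ^ (q - 1) * a - |b| ^ (q - 1) * b) / q := by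
  have hint : ∀ u v : ℝ, IntervalIntegrable (fun s : ℝ => |s| ^ (q - 1)) volume u v :=
    fun u v => absRpow_intInt (by linarith) u v
  have key : ∀ u v : ℝ, u ≤ v → (∀ x ∈ Ioo u v, x ≠ 0) →
      ∫ s in u..v, |s| ^ (q - 1)
        = |v| ^ (q - 1) * v / q - |u| ^ (q - 1) * u / q := by
    intro u v huv hne
    exact integral_eq_sub_of_hasDeriv_right_of_le huv
      (((phi_cont hq).div_const q).continuousOn)
      (fun x hx => (phi_deriv hq (hne x hx)).hasDerivWithinAt)
      (hint u v)
  rcases le_or_gt 0 b with hb | hb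
  · rw [key b a hba (fun x hx => (lt_of_le_of_lt hb hx.1).ne')]
    ring
  rcases le_or_gt a 0 with ha | ha
  · rw [key b a hba (fun x hx => (lt_of_lt_of_le hx.2 ha).ne)]
    ring
  · rw [← integral_add_adjacent_intervals (hint b 0) (hint 0 a),
      key b 0 hb.le (fun x hx => hx.2.ne), key 0 a ha.le (fun x hx => hx.1.ne')]
    simp
    ring

lemma lin_integral (b u v : ℝ) : ∫ s in u..v, (s - b) = ((v - b) ^ 2 - (u - b) ^ 2) / 2 := by
  rw [show (fun s : ℝ => s - b) = (fun s : ℝ => (fun x : ℝ => x) (s - b)) from rfl,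
    intervalIntegral.integral_comp_sub_right (fun x : ℝ => x) b, integral_id]

lemma rpow_sub_one_mul {x q : ℝ} (hx : x ≠ 0) : x ^ (q - 1) * x = x ^ q := by
  rw [← Real.rpow_add_one hx (q - 1)]; norm_num

lemma abs_le_M {a b s : ℝ} (hs : s ∈ Icc b a) : |s| ≤ |a| + |b| := by
  have h1 := le_abs_self a; have h2 := neg_abs_le b
  have h3 := abs_nonneg a; have h4 := abs_nonneg b
  rw [abs_le]; exact ⟨by linarith [hs.1], by linarith [hs.2]⟩

lemma upper_ge1 {q : ℝ} (hq1 : 1 ≤ q) {a b : ℝ} (hba : b < a) :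
    ∫ s in b..a, |s| ^ (q - 1) * (s - b) ≤ (|a| + |b|) ^ (q - 1) * ((a - b) ^ 2 / 2) := by
  have h1 : ∫ s in b..a, |s| ^ (q - 1) * (s - b)
      ≤ ∫ s in b..a, (|a| + |b|) ^ (q - 1) * (s - b) := by
    apply integral_mono_on hba.le
    · exact (absRpow_intInt (by linarith) b a).mul_continuousOn (by fun_prop)
    · exact (Continuous.intervalIntegrable (by fun_prop) _ _)
    · intro s hs
      exact mul_le_mul_of_nonneg_right
        (Real.rpow_le_rpow (abs_nonneg s) (abs_le_M hs) (by linarith))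
        (by linarith [hs.1])
  have h2 : ∫ s in b..a, (|a| + |b|) ^ (q - 1) * (s - b)
      = (|a| + |b|) ^ (q - 1) * ((a - b) ^ 2 / 2) := by
    rw [intervalIntegral.integral_const_mul, lin_integral]; ring
  linarith

lemma lower_lt1 {q : ℝ} (hq : 0 < q) (hq1 : q ≤ 1) {a b : ℝ} (hba : b < a) :
    (|a| + |b|) ^ (q - 1) * ((a - b) ^ 2 / 2) ≤ ∫ s in b..a, |s| ^ (q - 1) * (s - b) := by
  have h1 : ∫ s in b..a, (|a| + |b|) ^ (q - 1) * (s - b)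
      ≤ ∫ s in b..a, |s| ^ (q - 1) * (s - b) := by
    apply integral_mono_ae_restrict hba.le
    · exact (Continuous.intervalIntegrable (by fun_prop) _ _)
    · exact (absRpow_intInt (by linarith) b a).mul_continuousOn (by fun_prop)
    · have h0 : ∀ᵐ s : ℝ, s ≠ 0 := by
        rw [ae_iff]
        have : {x : ℝ | ¬x ≠ 0} = {0} := by ext x; simp
        rw [this]; exact measure_singleton 0
      filter_upwards [ae_restrict_of_ae h0, ae_restrict_mem measurableSet_Icc] with s hs hmem
      exact mul_le_mul_of_nonneg_right
        (Real.rpow_le_rpow_of_nonpos (abs_pos.2 hs) (abs_le_M hmem) (by linarith))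
        (by linarith [hmem.1])
  have h2 : ∫ s in b..a, (|a| + |b|) ^ (q - 1) * (s - b)
      = (|a| + |b|) ^ (q - 1) * ((a - b) ^ 2 / 2) := by
    rw [intervalIntegral.integral_const_mul, lin_integral]; ring
  linarith

lemma phi_diff_aux {q : ℝ} (hq : 0 < q) (hq1 : q ≤ 1) {a b : ℝ} (hb : 0 ≤ b) (hba : b < a) :
    |a| ^ (q - 1) * a - |b| ^ (q - 1) * b ≤ 2 * (|a| + |b|) ^ (q - 1) * (a - b) := by
  have ha : 0 < a := lt_of_le_of_lt hb hba
  rw [abs_of_pos ha, abs_of_nonneg hb]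
  -- step 1 : a ^ (q-1) * a - b ^ (q-1) * b ≤ a ^ (q-1) * (a - b)
  have step1 : a ^ (q - 1) * a - b ^ (q - 1) * b ≤ a ^ (q - 1) * (a - b) := by
    have h1 : a ^ (q - 1) * b ≤ b ^ (q - 1) * b := by
      rcases eq_or_lt_of_le hb with rfl | hb'
      · simp
      · exact mul_le_mul_of_nonneg_right
          (Real.rpow_le_rpow_of_nonpos hb' hba.le (by linarith)) hb
    nlinarith
  -- step 2 : a ^ (q-1) ≤ 2 * (a + b) ^ (q-1)
  have step2 : a ^ (q - 1) ≤ 2 * (a + b) ^ (q - 1) := by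
    have h2 : (a + b) ^ (q - 1) ≥ (2 * a) ^ (q - 1) :=
      Real.rpow_le_rpow_of_nonpos (by linarith) (by linarith) (by linarith)
    have h3 : (2 * a) ^ (q - 1) = 2 ^ (q - 1) * a ^ (q - 1) :=
      Real.mul_rpow (by norm_num) ha.le
    have h4 : (2 : ℝ) ^ (-1 : ℝ) ≤ 2 ^ (q - 1) :=
      Real.rpow_le_rpow_of_exponent_le (by norm_num) (by linarith)
    have h5 : (2 : ℝ) ^ (-1 : ℝ) = 1 / 2 := by
      rw [Real.rpow_neg_one]; norm_num
    have h6 : 0 ≤ a ^ (q - 1) := Real.rpow_nonneg ha.le _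
    have h4' : (1 / 2 : ℝ) ≤ 2 ^ (q - 1) := h5 ▸ h4
    nlinarith [mul_le_mul_of_nonneg_right h4' h6]
  calc a ^ (q - 1) * a - b ^ (q - 1) * b ≤ a ^ (q - 1) * (a - b) := step1
    _ ≤ 2 * (a + b) ^ (q - 1) * (a - b) :=
        mul_le_mul_of_nonneg_right step2 (by linarith)

lemma phi_diff {q : ℝ} (hq : 0 < q) (hq1 : q ≤ 1) {a b : ℝ} (hba : b < a) :
    |a| ^ (q - 1) * a - |b| ^ (q - 1) * b ≤ 2 * (|a| + |b|) ^ (q - 1) * (a - b) := by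
  rcases le_or_gt 0 b with hb | hb
  · exact phi_diff_aux hq hq1 hb hba
  rcases le_or_gt a 0 with ha | ha
  · have h := phi_diff_aux hq hq1 (a := -b) (b := -a) (by linarith) (by linarith)
    rw [abs_neg, abs_neg] at h
    have e1 : |b| + |a| = |a| + |b| := by ring
    rw [e1] at h
    linarith
  · -- b < 0 < a
    have hM : 0 < |a| + |b| := by
      have := abs_pos.2 ha.ne'; have := abs_nonneg b; linarith
    rw [abs_of_pos ha, abs_of_neg hb]
    have hMe : a + -b = (a + -b) := rfl
    set M := a + -b with hMdef
    have ha' : a ^ (q - 1) * a = a ^ q := rpow_sub_one_mul ha.ne'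
    have hb' : (-b) ^ (q - 1) * b = -((-b) ^ q) := by
      have : (-b) ^ (q - 1) * (-b) = (-b) ^ q := rpow_sub_one_mul (by linarith : (-b) ≠ 0)
      linarith [this]
    have hMq : M ^ (q - 1) * M = M ^ q := rpow_sub_one_mul (by linarith : (0:ℝ) < M).ne'
    have h1 : a ^ q ≤ M ^ q := Real.rpow_le_rpow ha.le (by linarith) hq.le
    have h2 : (-b) ^ q ≤ M ^ q := Real.rpow_le_rpow (by linarith) (by linarith) hq.le
    have : a ^ (q - 1) * a - (-b) ^ (q - 1) * b = a ^ q + (-b) ^ q := by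
      rw [ha']; linarith [hb']
    rw [this]
    calc a ^ q + (-b) ^ q ≤ 2 * M ^ q := by linarith
      _ = 2 * M ^ (q - 1) * M := by rw [← hMq]; ring
      _ = 2 * M ^ (q - 1) * (a - b) := by rw [hMdef]; ring_nf

lemma upper_lt1 {q : ℝ} (hq : 0 < q) (hq1 : q ≤ 1) {a b : ℝ} (hba : b < a) :
    q * ∫ s in b..a, |s| ^ (q - 1) * (s - b)
      ≤ 2 * ((|a| + |b|) ^ (q - 1) * (a - b) ^ 2) := by
  have s1 : ∫ s in b..a, |s| ^ (q - 1) * (s - b)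
      ≤ ∫ s in b..a, |s| ^ (q - 1) * (a - b) := by
    apply integral_mono_on hba.le
    · exact (absRpow_intInt (by linarith) b a).mul_continuousOn (by fun_prop)
    · exact (absRpow_intInt (by linarith) b a).mul_continuousOn (by fun_prop)
    · intro s hs
      exact mul_le_mul_of_nonneg_left (by linarith [hs.2])
        (Real.rpow_nonneg (abs_nonneg s) _)
  have s2 : ∫ s in b..a, |s| ^ (q - 1) * (a - b)
      = (|a| ^ (q - 1) * a - |b| ^ (q - 1) * b) / q * (a - b) := by
    rw [intervalIntegral.integral_mul_const, absRpow_integral hq hba.le]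
  have s4 := phi_diff hq hq1 hba
  have hd : 0 < a - b := by linarith
  calc q * ∫ s in b..a, |s| ^ (q - 1) * (s - b)
      ≤ q * ((|a| ^ (q - 1) * a - |b| ^ (q - 1) * b) / q * (a - b)) := by
        apply mul_le_mul_of_nonneg_left _ hq.le
        rw [← s2]; exact s1
    _ = (|a| ^ (q - 1) * a - |b| ^ (q - 1) * b) * (a - b) := by field_simp
    _ ≤ 2 * (|a| + |b|) ^ (q - 1) * (a - b) * (a - b) :=
        mul_le_mul_of_nonneg_right s4 hd.le
    _ = 2 * ((|a| + |b|) ^ (q - 1) * (a - b) ^ 2) := by ring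

lemma lower_ge1 {q : ℝ} (hq1 : 1 ≤ q) {a b : ℝ} (hba : b < a) :
    ((|a| + |b|) / 4) ^ (q - 1) * ((a - b) ^ 2 / 32)
      ≤ ∫ s in b..a, |s| ^ (q - 1) * (s - b) := by
  have hq : (0:ℝ) < q := by linarith
  have hint : ∀ u v : ℝ, IntervalIntegrable (fun s : ℝ => |s| ^ (q - 1) * (s - b)) volume u v :=
    fun u v => (absRpow_intInt (by linarith) u v).mul_continuousOn (by fun_prop)
  set M := |a| + |b| with hM
  have hdM : a - b ≤ M := by
    have := le_abs_self a; have := neg_abs_le b; simp only [hM]; linarith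
  have hMpos : 0 < M := by linarith
  have habs : ∀ u v : ℝ, b ≤ u → u ≤ v → v ≤ a → (∀ s ∈ Icc u v, M / 4 ≤ |s|) →
      (M / 4) ^ (q - 1) * (((v - b) ^ 2 - (u - b) ^ 2) / 2)
        ≤ ∫ s in b..a, |s| ^ (q - 1) * (s - b) := by
    intro u v hbu huv hva hs
    have t1 := integral_add_adjacent_intervals (hint b u) (hint u a)
    have t2 := integral_add_adjacent_intervals (hint u v) (hint v a)
    have nn1 : 0 ≤ ∫ s in b..u, |s| ^ (q - 1) * (s - b) :=
      intervalIntegral.integral_nonneg hbu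
        (fun s hsx => mul_nonneg (Real.rpow_nonneg (abs_nonneg s) _) (by linarith [hsx.1]))
    have nn2 : 0 ≤ ∫ s in v..a, |s| ^ (q - 1) * (s - b) :=
      intervalIntegral.integral_nonneg hva
        (fun s hsx => mul_nonneg (Real.rpow_nonneg (abs_nonneg s) _) (by linarith [hsx.1]))
    have hmono : ∫ s in u..v, (M / 4) ^ (q - 1) * (s - b)
        ≤ ∫ s in u..v, |s| ^ (q - 1) * (s - b) := by
      apply integral_mono_on huv (Continuous.intervalIntegrable (by fun_prop) _ _) (hint u v)
      intro s hsx
      exact mul_le_mul_of_nonneg_right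
        (Real.rpow_le_rpow (by linarith) (hs s hsx) (by linarith))
        (by linarith [hsx.1])
    have e2 : ∫ s in u..v, (M / 4) ^ (q - 1) * (s - b)
        = (M / 4) ^ (q - 1) * (((v - b) ^ 2 - (u - b) ^ 2) / 2) := by
      rw [intervalIntegral.integral_const_mul, lin_integral]
    linarith
  rcases le_or_gt |b| |a| with hc | hc
  · have ha : 0 < a := by
      rcases le_or_gt a 0 with h | h
      · exfalso
        rw [abs_of_nonpos h, abs_of_nonpos (by linarith : b ≤ 0)] at hc; linarith
      · exact h
    have haa : |a| = a := abs_of_pos ha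
    have hblb : |b| ≤ a := haa ▸ hc
    have hpt : ∀ s ∈ Icc (a - (a - b) / 4) a, M / 4 ≤ |s| := by
      intro s hsx
      have hnb := neg_abs_le b
      have h1 : M / 4 ≤ s := by
        simp only [hM, haa]
        linarith [hsx.1]
      linarith [le_abs_self s]
    have hfin := habs (a - (a - b) / 4) a (by linarith) (by linarith) le_rfl hpt
    refine le_trans ?_ hfin
    apply mul_le_mul_of_nonneg_left ?_ (Real.rpow_nonneg (by linarith) _)
    nlinarith [sq_nonneg (a - b)]
  · have hb : b < 0 := by
      rcases le_or_gt 0 b with h | h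
      · exfalso
        rw [abs_of_nonneg h, abs_of_pos (by linarith : 0 < a)] at hc; linarith
      · exact h
    have hbb : |b| = -b := abs_of_neg hb
    have hab : |a| ≤ -b := by rw [← hbb]; exact hc.le
    have hpt : ∀ s ∈ Icc b (b + (a - b) / 4), M / 4 ≤ |s| := by
      intro s hsx
      have hla := le_abs_self a
      have h1 : s ≤ -(M / 4) := by
        simp only [hM, hbb]
        linarith [hsx.2]
      have : M / 4 ≤ -s := by linarith
      linarith [neg_le_abs s]
    have hfin := habs b (b + (a - b) / 4) le_rfl (by linarith) (by linarith) hpt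
    refine le_trans ?_ hfin
    apply mul_le_mul_of_nonneg_left ?_ (Real.rpow_nonneg (by linarith) _)
    nlinarith [sq_nonneg (a - b)]

lemma refl_int (q b a : ℝ) :
    ∫ s in (-b)..(-a), |s| ^ (q - 1) * (s - -b) = ∫ s in b..a, |s| ^ (q - 1) * (s - b) := by
  rw [← intervalIntegral.integral_comp_neg (a := a) (b := b)
    (f := fun s => |s| ^ (q - 1) * (s - -b))]
  have h : ∀ x : ℝ, |(-x)| ^ (q - 1) * (-x - -b) = -(|x| ^ (q - 1) * (x - b)) := by
    intro x; rw [abs_neg]; ring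
  simp_rw [h]
  rw [intervalIntegral.integral_neg, intervalIntegral.integral_symm a b]

lemma core_lt {q : ℝ} (hq : 0 < q) {a b : ℝ} (hba : b < a) :
    (q / 2 + 2 + 2 / q + 32 * 4 ^ (q - 1) / q)⁻¹ * ((|a| + |b|) ^ (q - 1) * (a - b) ^ 2)
        ≤ q * ∫ s in b..a, |s| ^ (q - 1) * (s - b) ∧
      q * (∫ s in b..a, |s| ^ (q - 1) * (s - b))
        ≤ (q / 2 + 2 + 2 / q + 32 * 4 ^ (q - 1) / q) * ((|a| + |b|) ^ (q - 1) * (a - b) ^ 2) := by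
  have h4 : (0:ℝ) < 4 ^ (q - 1) := Real.rpow_pos_of_pos (by norm_num) _
  set γ : ℝ := q / 2 + 2 + 2 / q + 32 * 4 ^ (q - 1) / q with hγdef
  have hγ : 0 < γ := by positivity
  have hMnn : (0:ℝ) ≤ |a| + |b| := by positivity
  have hXnn : (0:ℝ) ≤ (|a| + |b|) ^ (q - 1) * (a - b) ^ 2 := by positivity
  have hinv : ∀ c : ℝ, 0 < c → c⁻¹ ≤ γ → γ⁻¹ ≤ c := by
    intro c hc hcγ
    calc γ⁻¹ ≤ (c⁻¹)⁻¹ := inv_anti₀ (by positivity) hcγ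
      _ = c := inv_inv c
  constructor
  · rcases le_or_gt 1 q with hq1 | hq1
    · have L := lower_ge1 hq1 hba
      have hγi : γ⁻¹ ≤ q / (32 * 4 ^ (q - 1)) := by
        apply hinv _ (by positivity)
        rw [inv_div]
        simp only [hγdef]
        have : 0 < 2 / q := by positivity
        nlinarith
      calc γ⁻¹ * ((|a| + |b|) ^ (q - 1) * (a - b) ^ 2)
          ≤ q / (32 * 4 ^ (q - 1)) * ((|a| + |b|) ^ (q - 1) * (a - b) ^ 2) :=
            mul_le_mul_of_nonneg_right hγi hXnn
        _ = q * (((|a| + |b|) / 4) ^ (q - 1) * ((a - b) ^ 2 / 32)) := by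
            rw [Real.div_rpow hMnn (by norm_num)]
            ring
        _ ≤ q * ∫ s in b..a, |s| ^ (q - 1) * (s - b) :=
            mul_le_mul_of_nonneg_left L hq.le
    · have L := lower_lt1 hq hq1.le hba
      have hγi : γ⁻¹ ≤ q / 2 := by
        apply hinv _ (by positivity)
        rw [inv_div]
        simp only [hγdef]
        have h1 : 0 < q / 2 := by positivity
        have h2 : 0 < 32 * 4 ^ (q - 1) / q := by positivity
        linarith
      calc γ⁻¹ * ((|a| + |b|) ^ (q - 1) * (a - b) ^ 2)
          ≤ q / 2 * ((|a| + |b|) ^ (q - 1) * (a - b) ^ 2) :=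
            mul_le_mul_of_nonneg_right hγi hXnn
        _ = q * ((|a| + |b|) ^ (q - 1) * ((a - b) ^ 2 / 2)) := by ring
        _ ≤ q * ∫ s in b..a, |s| ^ (q - 1) * (s - b) :=
            mul_le_mul_of_nonneg_left L hq.le
  · rcases le_or_gt 1 q with hq1 | hq1
    · have U := upper_ge1 hq1 hba
      have hcoef : q / 2 ≤ γ := by
        simp only [hγdef]
        have h1 : 0 < 2 / q := by positivity
        have h2 : 0 < 32 * 4 ^ (q - 1) / q := by positivity
        linarith
      calc q * ∫ s in b..a, |s| ^ (q - 1) * (s - b)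
          ≤ q * ((|a| + |b|) ^ (q - 1) * ((a - b) ^ 2 / 2)) :=
            mul_le_mul_of_nonneg_left U hq.le
        _ = q / 2 * ((|a| + |b|) ^ (q - 1) * (a - b) ^ 2) := by ring
        _ ≤ γ * ((|a| + |b|) ^ (q - 1) * (a - b) ^ 2) :=
            mul_le_mul_of_nonneg_right hcoef hXnn
    · have U := upper_lt1 hq hq1.le hba
      have hcoef : (2:ℝ) ≤ γ := by
        simp only [hγdef]
        have h1 : 0 < q / 2 := by positivity
        have h2 : 0 < 2 / q := by positivity
        have h3 : 0 < 32 * 4 ^ (q - 1) / q := by positivity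
        linarith
      calc q * ∫ s in b..a, |s| ^ (q - 1) * (s - b)
          ≤ 2 * ((|a| + |b|) ^ (q - 1) * (a - b) ^ 2) := U
        _ ≤ γ * ((|a| + |b|) ^ (q - 1) * (a - b) ^ 2) :=
            mul_le_mul_of_nonneg_right hcoef hXnn

/-- For `q > 0` and `𝔤(w,k) := q ∫_k^w |s|^(q-1) (s-k) ds`, there is `γ = γ(q) > 0` such that
`γ⁻¹ (|a|+|b|)^(q-1) |a-b|² ≤ 𝔤(a,b) ≤ γ (|a|+|b|)^(q-1) |a-b|²` for all `a, b ∈ ℝ`. -/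
theorem g_function_comparison (q : ℝ) (hq : 0 < q) :
    ∃ γ : ℝ, 0 < γ ∧ ∀ a b : ℝ,
      γ⁻¹ * ((|a| + |b|) ^ (q - 1) * |a - b| ^ 2) ≤ q * ∫ s in b..a, |s| ^ (q - 1) * (s - b) ∧
      q * (∫ s in b..a, |s| ^ (q - 1) * (s - b)) ≤ γ * ((|a| + |b|) ^ (q - 1) * |a - b| ^ 2) := by
  have h4 : (0:ℝ) < 4 ^ (q - 1) := Real.rpow_pos_of_pos (by norm_num) _
  refine ⟨q / 2 + 2 + 2 / q + 32 * 4 ^ (q - 1) / q, by positivity, fun a b => ?_⟩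
  rcases lt_trichotomy b a with hba | rfl | hab
  · have habs : |a - b| = a - b := abs_of_pos (by linarith)
    rw [habs]
    exact core_lt hq hba
  · simp
  · have habs : |a - b| = -a - -b := by
      rw [abs_of_neg (by linarith : a - b < 0)]; ring
    have key := core_lt hq (a := -a) (b := -b) (by linarith)
    rw [abs_neg, abs_neg, refl_int] at key
    rw [habs]
    exact key
end

section
/- Let q > 0 and define 𝔤₊(w,k) := q ∫_k^w |s|^{q−1}(s−k)₊ ds and 𝔤₋(w,k) := −q ∫_k^w |s|^{q−1}(s−k)₋ ds for w, k ∈ ℝ. There exists a constant γ = γ(q) > 0 such that for all a, b ∈ ℝ one has γ⁻¹ (|a| + |b|)^{q−1} (a − b)₊² ≤ 𝔤₊(a,b) ≤ γ (|a| + |b|)^{q−1} (a − b)₊² and γ⁻¹ (|a| + |b|)^{q−1} (a − b)₋² ≤ 𝔤₋(a,b) ≤ γ (|a| + |b|)^{q−1} (a − b)₋², with the convention that all quantities are zero when a = b = 0. -/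
open MeasureTheory intervalIntegral Set Real

namespace GPMaux

lemma ii_abs_rpow {p : ℝ} (hp : -1 < p) (a b : ℝ) :
    IntervalIntegrable (fun s : ℝ => |s| ^ p) volume a b := by
  have key0 : ∀ c : ℝ, 0 ≤ c → IntervalIntegrable (fun s : ℝ => |s| ^ p) volume 0 c := by
    intro c hc
    apply (intervalIntegrable_rpow' hp (a := 0) (b := c)).congr
    rw [uIoc_of_le hc]
    intro x hx
    show x ^ p = |x| ^ p
    rw [abs_of_pos hx.1]
  have key : ∀ c : ℝ, IntervalIntegrable (fun s : ℝ => |s| ^ p) volume 0 c := by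
    intro c
    rcases le_total 0 c with hc | hc
    · exact key0 c hc
    · rw [IntervalIntegrable.iff_comp_neg]
      simp only [abs_neg, neg_zero]
      exact key0 (-c) (by linarith)
  exact (key a).symm.trans (key b)

lemma ii_main {q : ℝ} (hq : 0 < q) (b c d : ℝ) :
    IntervalIntegrable (fun s : ℝ => |s| ^ (q - 1) * max (s - b) 0) volume c d :=
  (ii_abs_rpow (by linarith) c d).mul_continuousOn
    (((continuous_id.sub continuous_const).max continuous_const).continuousOn)

lemma int_abs_rpow_nonneg {q : ℝ} (hq : 0 < q) {c d : ℝ} (h0 : 0 ≤ c) (hcd : c ≤ d) :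
    ∫ s in c..d, |s| ^ (q - 1) = (d ^ q - c ^ q) / q := by
  rw [integral_congr (g := fun s : ℝ => s ^ (q - 1)) ?_]
  · rw [integral_rpow (Or.inl (by linarith))]
    have h1 : q - 1 + 1 = q := by ring
    rw [h1]
  · intro s hs
    rw [uIcc_of_le hcd] at hs
    simp only
    rw [abs_of_nonneg (le_trans h0 hs.1)]

lemma int_abs_rpow_nonpos {q : ℝ} (hq : 0 < q) {c d : ℝ} (hd : d ≤ 0) (hcd : c ≤ d) :
    ∫ s in c..d, |s| ^ (q - 1) = ((-c) ^ q - (-d) ^ q) / q := by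
  have e := integral_comp_neg (a := c) (b := d) (fun t : ℝ => |t| ^ (q - 1))
  simp only [abs_neg] at e
  rw [e, int_abs_rpow_nonneg hq (by linarith : (0:ℝ) ≤ -d) (by linarith)]

lemma int_abs_rpow_le {q : ℝ} (hq : 0 < q) {b a : ℝ} (hba : b ≤ a) :
    ∫ s in b..a, |s| ^ (q - 1) ≤ (|b| ^ q + |a| ^ q) / q := by
  rcases le_or_gt 0 b with hb | hb
  · rw [int_abs_rpow_nonneg hq hb hba, abs_of_nonneg hb, abs_of_nonneg (hb.trans hba)]
    have h1 : (0:ℝ) ≤ b ^ q := rpow_nonneg hb q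
    gcongr
    linarith
  rcases le_or_gt a 0 with ha | ha
  · rw [int_abs_rpow_nonpos hq ha hba, abs_of_neg hb, abs_of_nonpos ha]
    have h1 : (0:ℝ) ≤ (-a) ^ q := rpow_nonneg (by linarith) q
    gcongr
    linarith
  · have hsplit := integral_add_adjacent_intervals
      (ii_abs_rpow (show (-1:ℝ) < q - 1 by linarith) b 0)
      (ii_abs_rpow (show (-1:ℝ) < q - 1 by linarith) 0 a)
    rw [← hsplit, int_abs_rpow_nonpos hq le_rfl hb.le, int_abs_rpow_nonneg hq le_rfl ha.le,
      abs_of_neg hb, abs_of_pos ha, neg_zero, zero_rpow hq.ne']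
    apply le_of_eq
    ring


lemma band_lower {q : ℝ} (hq : 0 < q) {M s : ℝ} (hM : 0 < M) (h1 : M / 8 ≤ |s|) (h2 : |s| ≤ M) :
    min ((8:ℝ) ^ (1 - q)) 1 * M ^ (q - 1) ≤ |s| ^ (q - 1) := by
  have hMq : (0:ℝ) ≤ M ^ (q - 1) := rpow_nonneg hM.le _
  rcases le_total 1 q with h | h
  · have key : (M / 8) ^ (q - 1) ≤ |s| ^ (q - 1) :=
      rpow_le_rpow (by positivity) h1 (by linarith)
    have h8 : (8:ℝ) ^ (1 - q) = ((8:ℝ) ^ (q - 1))⁻¹ := by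
      rw [show (1 - q) = -(q - 1) by ring, rpow_neg (by norm_num : (0:ℝ) ≤ 8)]
    have e : (M / 8 : ℝ) ^ (q - 1) = (8:ℝ) ^ (1 - q) * M ^ (q - 1) := by
      rw [div_rpow hM.le (by norm_num : (0:ℝ) ≤ 8), h8, div_eq_mul_inv, mul_comm]
    have h3 : min ((8:ℝ) ^ (1 - q)) 1 * M ^ (q - 1) ≤ (8:ℝ) ^ (1 - q) * M ^ (q - 1) :=
      mul_le_mul_of_nonneg_right (min_le_left _ _) hMq
    rw [← e] at h3
    linarith
  · have key : M ^ (q - 1) ≤ |s| ^ (q - 1) :=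
      rpow_le_rpow_of_nonpos (lt_of_lt_of_le (by positivity) h1) h2 (by linarith)
    have h3 : min ((8:ℝ) ^ (1 - q)) 1 * M ^ (q - 1) ≤ 1 * M ^ (q - 1) :=
      mul_le_mul_of_nonneg_right (min_le_right _ _) hMq
    rw [one_mul] at h3
    linarith

lemma band_upper_ge1 {q : ℝ} (h1 : 1 ≤ q) {M s : ℝ} (hM : 0 ≤ M) (hs : |s| ≤ M) :
    |s| ^ (q - 1) ≤ max ((4:ℝ) ^ (1 - q)) 1 * M ^ (q - 1) := by
  have h2 : |s| ^ (q - 1) ≤ M ^ (q - 1) := rpow_le_rpow (abs_nonneg s) hs (by linarith)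
  have h3 : M ^ (q - 1) ≤ max ((4:ℝ) ^ (1 - q)) 1 * M ^ (q - 1) := by
    nlinarith [rpow_nonneg hM (q - 1), le_max_right ((4:ℝ) ^ (1 - q)) 1]
  linarith

lemma band_upper_le1 {q : ℝ} (hq : 0 < q) (h1 : q ≤ 1) {M s : ℝ} (hM : 0 < M)
    (hs : M / 4 ≤ |s|) :
    |s| ^ (q - 1) ≤ max ((4:ℝ) ^ (1 - q)) 1 * M ^ (q - 1) := by
  have h2 : |s| ^ (q - 1) ≤ (M / 4) ^ (q - 1) :=
    rpow_le_rpow_of_nonpos (by positivity) hs (by linarith)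
  have h4 : (4:ℝ) ^ (1 - q) = ((4:ℝ) ^ (q - 1))⁻¹ := by
    rw [show (1 - q) = -(q - 1) by ring, rpow_neg (by norm_num : (0:ℝ) ≤ 4)]
  have e : (M / 4 : ℝ) ^ (q - 1) = (4:ℝ) ^ (1 - q) * M ^ (q - 1) := by
    rw [div_rpow hM.le (by norm_num : (0:ℝ) ≤ 4), h4, div_eq_mul_inv, mul_comm]
  have h3 : (4:ℝ) ^ (1 - q) * M ^ (q - 1) ≤ max ((4:ℝ) ^ (1 - q)) 1 * M ^ (q - 1) :=
    mul_le_mul_of_nonneg_right (le_max_left _ _) (rpow_nonneg hM.le _)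
  rw [e] at h2
  linarith

lemma int_sub (b a : ℝ) : ∫ s in b..a, (s - b) = (a - b) ^ 2 / 2 := by
  have h1 : IntervalIntegrable (fun s : ℝ => s) volume b a :=
    continuous_id.intervalIntegrable _ _
  have h2 : IntervalIntegrable (fun _ : ℝ => b) volume b a := intervalIntegrable_const
  rw [integral_sub h1 h2, integral_id, intervalIntegral.integral_const, smul_eq_mul]
  ring

lemma lower_aux {q : ℝ} (hq : 0 < q) {b a c d C : ℝ} (hC : 0 ≤ C) (hbc : b ≤ c)
    (hcd : c ≤ d) (hda : d ≤ a)
    (hpt : ∀ s ∈ Icc c d, C ≤ |s| ^ (q - 1) * (s - b)) :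
    C * (d - c) ≤ ∫ s in b..a, |s| ^ (q - 1) * max (s - b) 0 := by
  have h1 : (∫ _ in c..d, C) ≤ ∫ s in c..d, |s| ^ (q - 1) * max (s - b) 0 := by
    apply integral_mono_on hcd intervalIntegrable_const (ii_main hq b c d)
    intro s hs
    rw [max_eq_left (by linarith [hs.1] : (0:ℝ) ≤ s - b)]
    exact hpt s hs
  have h2 : (∫ s in c..d, |s| ^ (q - 1) * max (s - b) 0) ≤
      ∫ s in b..a, |s| ^ (q - 1) * max (s - b) 0 := by
    apply integral_mono_interval hbc hcd hda
    · exact Filter.Eventually.of_forall fun s =>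
        mul_nonneg (rpow_nonneg (abs_nonneg s) _) (le_max_right _ _)
    · exact ii_main hq b b a
  have h0 : (∫ _ in c..d, C) = C * (d - c) := by
    rw [intervalIntegral.integral_const, smul_eq_mul]; ring
  linarith

lemma lower_case {q : ℝ} (hq : 0 < q) {a b : ℝ} (c d : ℝ) (hba : b < a)
    (hbc : b ≤ c) (hcd : c ≤ d) (hda : d ≤ a) (hlen : (a - b) / 8 ≤ d - c)
    (hgeo : ∀ s ∈ Icc c d,
      (|a| + |b|) / 8 ≤ |s| ∧ |s| ≤ |a| + |b| ∧ (a - b) / 8 ≤ s - b) :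
    q * min ((8:ℝ) ^ (1 - q)) 1 / 64 * ((|a| + |b|) ^ (q - 1) * (a - b) ^ 2) ≤
      q * ∫ s in b..a, |s| ^ (q - 1) * max (s - b) 0 := by
  have hM : 0 < |a| + |b| := by
    have h1 := le_abs_self a
    have h2 := neg_abs_le b
    linarith
  have hκ : 0 < min ((8:ℝ) ^ (1 - q)) 1 :=
    lt_min (rpow_pos_of_pos (by norm_num) _) one_pos
  have hMq : (0:ℝ) ≤ (|a| + |b|) ^ (q - 1) := rpow_nonneg hM.le _
  have hC : 0 ≤ min ((8:ℝ) ^ (1 - q)) 1 * (|a| + |b|) ^ (q - 1) * ((a - b) / 8) :=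
    mul_nonneg (mul_nonneg hκ.le hMq) (by linarith)
  have key := lower_aux hq hC hbc hcd hda ?_
  · have h2 : min ((8:ℝ) ^ (1 - q)) 1 * (|a| + |b|) ^ (q - 1) * ((a - b) / 8) * ((a - b) / 8) ≤
        min ((8:ℝ) ^ (1 - q)) 1 * (|a| + |b|) ^ (q - 1) * ((a - b) / 8) * (d - c) :=
      mul_le_mul_of_nonneg_left hlen hC
    calc q * min ((8:ℝ) ^ (1 - q)) 1 / 64 * ((|a| + |b|) ^ (q - 1) * (a - b) ^ 2)
        = q * (min ((8:ℝ) ^ (1 - q)) 1 * (|a| + |b|) ^ (q - 1) * ((a - b) / 8) * ((a - b) / 8)) := by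
          ring
      _ ≤ q * (min ((8:ℝ) ^ (1 - q)) 1 * (|a| + |b|) ^ (q - 1) * ((a - b) / 8) * (d - c)) :=
          mul_le_mul_of_nonneg_left h2 hq.le
      _ ≤ q * ∫ s in b..a, |s| ^ (q - 1) * max (s - b) 0 :=
          mul_le_mul_of_nonneg_left key hq.le
  · intro s hs
    obtain ⟨h1, h2, h3⟩ := hgeo s hs
    have hb := band_lower hq hM h1 h2
    calc min ((8:ℝ) ^ (1 - q)) 1 * (|a| + |b|) ^ (q - 1) * ((a - b) / 8)
        ≤ |s| ^ (q - 1) * ((a - b) / 8) := mul_le_mul_of_nonneg_right hb (by linarith)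
      _ ≤ |s| ^ (q - 1) * (s - b) :=
          mul_le_mul_of_nonneg_left h3 (rpow_nonneg (abs_nonneg s) _)

lemma lower_main {q : ℝ} (hq : 0 < q) {a b : ℝ} (hba : b < a) :
    q * min ((8:ℝ) ^ (1 - q)) 1 / 64 * ((|a| + |b|) ^ (q - 1) * (a - b) ^ 2) ≤
      q * ∫ s in b..a, |s| ^ (q - 1) * max (s - b) 0 := by
  rcases le_or_gt 0 b with hb | hb
  · have ha : 0 < a := lt_of_le_of_lt hb hba
    apply lower_case hq ((a + b) / 2) a hba (by linarith) (by linarith) le_rfl (by linarith)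
    intro s hs
    rw [abs_of_nonneg (by linarith [hs.1] : (0:ℝ) ≤ s), abs_of_pos ha, abs_of_nonneg hb]
    exact ⟨by linarith [hs.1], by linarith [hs.2], by linarith [hs.1]⟩
  rcases le_or_gt a 0 with ha | ha
  · apply lower_case hq (b + (a - b) / 4) (b + (a - b) / 2) hba (by linarith) (by linarith)
      (by linarith) (by linarith)
    intro s hs
    rw [abs_of_nonpos (by linarith [hs.2] : s ≤ 0), abs_of_nonpos ha,
      abs_of_nonpos (by linarith : b ≤ 0)]
    exact ⟨by linarith [hs.2], by linarith [hs.1], by linarith [hs.1]⟩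
  · rcases le_total (-b) a with hc | hc
    · apply lower_case hq (a / 2) a hba (by linarith) (by linarith) le_rfl (by linarith)
      intro s hs
      rw [abs_of_nonneg (by linarith [hs.1] : (0:ℝ) ≤ s), abs_of_pos ha, abs_of_neg hb]
      exact ⟨by linarith [hs.1], by linarith [hs.2], by linarith [hs.1]⟩
    · apply lower_case hq (3 * b / 4) (b / 2) hba (by linarith) (by linarith) (by linarith)
        (by linarith)
      intro s hs
      rw [abs_of_nonpos (by linarith [hs.2] : s ≤ 0), abs_of_pos ha, abs_of_neg hb]
      exact ⟨by linarith [hs.2], by linarith [hs.1], by linarith [hs.1]⟩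


lemma upper_linear {q : ℝ} (hq : 0 < q) {a b K : ℝ} (hba : b ≤ a) (hK : 0 ≤ K)
    (hpt : ∀ s ∈ Icc b a, |s| ^ (q - 1) * max (s - b) 0 ≤ K * (s - b)) :
    (∫ s in b..a, |s| ^ (q - 1) * max (s - b) 0) ≤ K * ((a - b) ^ 2 / 2) := by
  have hcont : Continuous (fun s : ℝ => K * (s - b)) :=
    continuous_const.mul (continuous_id.sub continuous_const)
  have h1 := integral_mono_on hba (ii_main hq b b a) (hcont.intervalIntegrable b a) hpt
  have h2 : (∫ s in b..a, K * (s - b)) = K * ((a - b) ^ 2 / 2) := by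
    rw [intervalIntegral.integral_const_mul, int_sub]
  linarith [h2 ▸ h1]

lemma abs_le_sum {a b s : ℝ} (h1 : b ≤ s) (h2 : s ≤ a) : |s| ≤ |a| + |b| := by
  rcases abs_cases s with ⟨es, _⟩ | ⟨es, _⟩ <;>
    [linarith [le_abs_self a, abs_nonneg b]; linarith [neg_abs_le b, abs_nonneg a]]

lemma upper_main {q : ℝ} (hq : 0 < q) {a b : ℝ} (hba : b < a) :
    q * ∫ s in b..a, |s| ^ (q - 1) * max (s - b) 0 ≤
      (q * max ((4:ℝ) ^ (1 - q)) 1 + 4) * ((|a| + |b|) ^ (q - 1) * (a - b) ^ 2) := by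
  have hM : 0 < |a| + |b| := by
    have h1 := le_abs_self a
    have h2 := neg_abs_le b
    linarith
  have hMq : (0:ℝ) ≤ (|a| + |b|) ^ (q - 1) := rpow_nonneg hM.le _
  have hμ : (1:ℝ) ≤ max ((4:ℝ) ^ (1 - q)) 1 := le_max_right _ _
  have hband : (∀ s ∈ Icc b a,
        |s| ^ (q - 1) ≤ max ((4:ℝ) ^ (1 - q)) 1 * (|a| + |b|) ^ (q - 1)) →
      q * ∫ s in b..a, |s| ^ (q - 1) * max (s - b) 0 ≤
        (q * max ((4:ℝ) ^ (1 - q)) 1 + 4) * ((|a| + |b|) ^ (q - 1) * (a - b) ^ 2) := by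
    intro hpt
    have hK : (0:ℝ) ≤ max ((4:ℝ) ^ (1 - q)) 1 * (|a| + |b|) ^ (q - 1) :=
      mul_nonneg (by linarith) hMq
    have h1 := upper_linear hq hba.le hK ?_
    · have h2 := mul_le_mul_of_nonneg_left h1 hq.le
      have h3 : 0 ≤ (|a| + |b|) ^ (q - 1) * (a - b) ^ 2 :=
        mul_nonneg hMq (sq_nonneg _)
      nlinarith [h3, mul_nonneg (mul_nonneg (mul_nonneg hq.le
        (le_trans zero_le_one hμ)) hMq) (sq_nonneg (a - b)),
        mul_nonneg hMq (sq_nonneg (a - b))]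
    · intro s hs
      have hm : max (s - b) 0 = s - b := max_eq_left (by linarith [hs.1])
      rw [hm]
      exact mul_le_mul_of_nonneg_right (hpt s hs) (by linarith [hs.1])
  rcases le_total 1 q with h1 | h1
  · exact hband fun s hs => band_upper_ge1 h1 hM.le (abs_le_sum hs.1 hs.2)
  rcases le_total (|a| + |b|) (2 * (a - b)) with hm | hm
  · -- near case : direct bound via the integral of |s|^(q-1)
    have hh : 0 < a - b := by linarith
    have hpt : ∀ s ∈ Icc b a,
        |s| ^ (q - 1) * max (s - b) 0 ≤ |s| ^ (q - 1) * (a - b) := by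
      intro s hs
      exact mul_le_mul_of_nonneg_left
        (max_le (by linarith [hs.2]) hh.le) (rpow_nonneg (abs_nonneg s) _)
    have hint := integral_mono_on hba.le (ii_main hq b b a)
      ((ii_abs_rpow (show (-1:ℝ) < q - 1 by linarith) b a).mul_const (a - b)) hpt
    have h2 : (∫ s in b..a, |s| ^ (q - 1) * (a - b)) =
        (∫ s in b..a, |s| ^ (q - 1)) * (a - b) := integral_mul_const _ _
    have h3 := int_abs_rpow_le hq hba.le
    have hA : |b| ^ q ≤ (|a| + |b|) ^ q :=
      rpow_le_rpow (abs_nonneg b) (by linarith [abs_nonneg a]) hq.le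
    have hB : |a| ^ q ≤ (|a| + |b|) ^ q :=
      rpow_le_rpow (abs_nonneg a) (by linarith [abs_nonneg b]) hq.le
    have eMq : (|a| + |b|) ^ q = (|a| + |b|) ^ (q - 1) * (|a| + |b|) := by
      have h := Real.rpow_add hM (q - 1) 1
      rw [rpow_one] at h
      rw [show q - 1 + 1 = q from by ring] at h
      exact h
    have hJ : (∫ s in b..a, |s| ^ (q - 1)) * (a - b) ≤
        ((|b| ^ q + |a| ^ q) / q) * (a - b) :=
      mul_le_mul_of_nonneg_right h3 hh.le
    have hstep : q * ((( |b| ^ q + |a| ^ q) / q) * (a - b)) =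
        (|b| ^ q + |a| ^ q) * (a - b) := by
      field_simp
    have hfin : (|b| ^ q + |a| ^ q) * (a - b) ≤
        4 * ((|a| + |b|) ^ (q - 1) * (a - b) ^ 2) := by
      have e1 : (|b| ^ q + |a| ^ q) * (a - b) ≤
          (2 * ((|a| + |b|) ^ q)) * (a - b) := by nlinarith
      have e2 : (2 * ((|a| + |b|) ^ q)) * (a - b) =
          2 * ((|a| + |b|) ^ (q - 1) * ((|a| + |b|) * (a - b))) := by rw [eMq]; ring
      nlinarith [mul_le_mul_of_nonneg_left
        (mul_le_mul_of_nonneg_right hm hh.le) hMq]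
    have hmain : q * ∫ s in b..a, |s| ^ (q - 1) * max (s - b) 0 ≤
        4 * ((|a| + |b|) ^ (q - 1) * (a - b) ^ 2) := by
      calc q * ∫ s in b..a, |s| ^ (q - 1) * max (s - b) 0
          ≤ q * ∫ s in b..a, |s| ^ (q - 1) * (a - b) :=
            mul_le_mul_of_nonneg_left hint hq.le
        _ = q * ((∫ s in b..a, |s| ^ (q - 1)) * (a - b)) := by rw [h2]
        _ ≤ q * ((( |b| ^ q + |a| ^ q) / q) * (a - b)) :=
            mul_le_mul_of_nonneg_left hJ hq.le
        _ = (|b| ^ q + |a| ^ q) * (a - b) := hstep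
        _ ≤ 4 * ((|a| + |b|) ^ (q - 1) * (a - b) ^ 2) := hfin
    have h3' : 0 ≤ (|a| + |b|) ^ (q - 1) * (a - b) ^ 2 :=
      mul_nonneg hMq (sq_nonneg _)
    nlinarith [mul_pos hq (lt_of_lt_of_le one_pos hμ)]
  · -- far case : the whole interval stays away from 0
    apply hband
    intro s hs
    apply band_upper_le1 hq h1 hM
    rcases le_or_gt 0 b with hb | hb
    · have ea : |a| = a := abs_of_nonneg (by linarith)
      have eb : |b| = b := abs_of_nonneg hb
      rw [abs_of_nonneg (le_trans hb hs.1)]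
      rw [ea, eb] at hm ⊢
      linarith [hs.1]
    · have ha' : a < 0 := by
        by_contra hcon
        push_neg at hcon
        have ea : |a| = a := abs_of_nonneg hcon
        have eb : |b| = -b := abs_of_neg hb
        rw [ea, eb] at hm
        linarith
      have ea : |a| = -a := abs_of_neg ha'
      have eb : |b| = -b := abs_of_neg hb
      rw [abs_of_nonpos (by linarith [hs.2] : s ≤ 0)]
      rw [ea, eb] at hm ⊢
      linarith [hs.2]


lemma plus_bounds {q : ℝ} (hq : 0 < q) :
    ∃ γ : ℝ, 0 < γ ∧ ∀ a b : ℝ,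
      γ⁻¹ * ((|a| + |b|) ^ (q - 1) * (max (a - b) 0) ^ 2) ≤
          q * ∫ s in b..a, |s| ^ (q - 1) * max (s - b) 0 ∧
        q * (∫ s in b..a, |s| ^ (q - 1) * max (s - b) 0) ≤
          γ * ((|a| + |b|) ^ (q - 1) * (max (a - b) 0) ^ 2) := by
  have hcl : 0 < q * min ((8:ℝ) ^ (1 - q)) 1 / 64 :=
    div_pos (mul_pos hq (lt_min (rpow_pos_of_pos (by norm_num) _) one_pos)) (by norm_num)
  have hcu : 0 < q * max ((4:ℝ) ^ (1 - q)) 1 + 4 := by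
    nlinarith [mul_pos hq (lt_of_lt_of_le one_pos (le_max_right ((4:ℝ) ^ (1 - q)) 1))]
  refine ⟨max (q * max ((4:ℝ) ^ (1 - q)) 1 + 4) (q * min ((8:ℝ) ^ (1 - q)) 1 / 64)⁻¹,
    lt_of_lt_of_le hcu (le_max_left _ _), ?_⟩
  intro a b
  rcases le_or_gt a b with hab | hab
  · have h0 : (∫ s in b..a, |s| ^ (q - 1) * max (s - b) 0) = 0 := by
      rw [integral_congr (g := fun _ : ℝ => (0:ℝ)) ?_, intervalIntegral.integral_zero]
      intro s hs
      rw [uIcc_of_ge hab] at hs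
      simp only
      rw [max_eq_right (by linarith [hs.2] : s - b ≤ 0), mul_zero]
    have hmx : max (a - b) 0 = 0 := max_eq_right (by linarith)
    rw [h0, hmx]
    norm_num
  · have hmx : max (a - b) 0 = a - b := max_eq_left (by linarith)
    rw [hmx]
    have hX : (0:ℝ) ≤ (|a| + |b|) ^ (q - 1) * (a - b) ^ 2 :=
      mul_nonneg (rpow_nonneg (by positivity) _) (sq_nonneg _)
    constructor
    · have hinv : (max (q * max ((4:ℝ) ^ (1 - q)) 1 + 4)
          (q * min ((8:ℝ) ^ (1 - q)) 1 / 64)⁻¹)⁻¹ ≤ q * min ((8:ℝ) ^ (1 - q)) 1 / 64 := by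
        have h := inv_anti₀ (inv_pos.mpr hcl) (le_max_right
          (q * max ((4:ℝ) ^ (1 - q)) 1 + 4) (q * min ((8:ℝ) ^ (1 - q)) 1 / 64)⁻¹)
        rwa [inv_inv] at h
      calc (max (q * max ((4:ℝ) ^ (1 - q)) 1 + 4)
            (q * min ((8:ℝ) ^ (1 - q)) 1 / 64)⁻¹)⁻¹ * ((|a| + |b|) ^ (q - 1) * (a - b) ^ 2)
          ≤ q * min ((8:ℝ) ^ (1 - q)) 1 / 64 * ((|a| + |b|) ^ (q - 1) * (a - b) ^ 2) :=
            mul_le_mul_of_nonneg_right hinv hX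
        _ ≤ q * ∫ s in b..a, |s| ^ (q - 1) * max (s - b) 0 := lower_main hq hab
    · calc q * ∫ s in b..a, |s| ^ (q - 1) * max (s - b) 0
          ≤ (q * max ((4:ℝ) ^ (1 - q)) 1 + 4) * ((|a| + |b|) ^ (q - 1) * (a - b) ^ 2) :=
            upper_main hq hab
        _ ≤ max (q * max ((4:ℝ) ^ (1 - q)) 1 + 4) (q * min ((8:ℝ) ^ (1 - q)) 1 / 64)⁻¹ *
            ((|a| + |b|) ^ (q - 1) * (a - b) ^ 2) :=
            mul_le_mul_of_nonneg_right (le_max_left _ _) hX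

end GPMaux


/-- For `q > 0`, with `𝔤₊(w,k) := q ∫_k^w |s|^(q-1) (s-k)₊ ds` and
`𝔤₋(w,k) := −q ∫_k^w |s|^(q-1) (s-k)₋ ds`, there is `γ = γ(q) > 0` such that for all `a, b ∈ ℝ`:
`γ⁻¹ (|a|+|b|)^(q-1) (a-b)₊² ≤ 𝔤₊(a,b) ≤ γ (|a|+|b|)^(q-1) (a-b)₊²` and the analogous
two-sided bound for `𝔤₋` with `(a-b)₋`. -/
theorem g_pm_function_comparison (q : ℝ) (hq : 0 < q) :
    ∃ γ : ℝ, 0 < γ ∧ ∀ a b : ℝ,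
      (γ⁻¹ * ((|a| + |b|) ^ (q - 1) * (max (a - b) 0) ^ 2) ≤
          q * ∫ s in b..a, |s| ^ (q - 1) * max (s - b) 0 ∧
        q * (∫ s in b..a, |s| ^ (q - 1) * max (s - b) 0) ≤
          γ * ((|a| + |b|) ^ (q - 1) * (max (a - b) 0) ^ 2)) ∧
      (γ⁻¹ * ((|a| + |b|) ^ (q - 1) * (max (b - a) 0) ^ 2) ≤
          -q * ∫ s in b..a, |s| ^ (q - 1) * max (b - s) 0 ∧
        -q * (∫ s in b..a, |s| ^ (q - 1) * max (b - s) 0) ≤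
          γ * ((|a| + |b|) ^ (q - 1) * (max (b - a) 0) ^ 2)) := by
  obtain ⟨γ, hγ, H⟩ := GPMaux.plus_bounds hq
  refine ⟨γ, hγ, fun a b => ⟨H a b, ?_⟩⟩
  have key : -q * (∫ s in b..a, |s| ^ (q - 1) * max (b - s) 0) =
      q * ∫ s in (-b)..(-a), |s| ^ (q - 1) * max (s - (-b)) 0 := by
    have e := integral_comp_neg (a := b) (b := a)
      (fun t : ℝ => |t| ^ (q - 1) * max (t - (-b)) 0)
    simp only [abs_neg, neg_sub_neg] at e
    rw [e, integral_symm (-b) (-a)]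
    ring
  have HH := H (-a) (-b)
  rw [abs_neg, abs_neg, show (-a : ℝ) - (-b) = b - a from by ring, ← key] at HH
  exact HH
end

section
/- Let μ ∈ (0,1], p > 1 and k ∈ ℕ. There exists a constant γ = γ(p) > 0 such that for all ξ, ξ̃ ∈ ℝᵏ one has | (μ² + |ξ|²)^{(p−2)/2} ξ − (μ² + |ξ̃|²)^{(p−2)/2} ξ̃ | ≤ γ (μ² + |ξ|² + |ξ̃|²)^{(p−2)/2} |ξ − ξ̃|, where |·| denotes the Euclidean norm on ℝᵏ. -/
/-!
Put `α = √(μ² + |ξ|²)`, `β = √(μ² + |ξ̃|²)` and `s = p - 2 ≥ -1`, and assume `|ξ̃| ≤ |ξ|`. Then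
`α^s ξ - β^s ξ̃ = α^s (ξ - ξ̃) + (α^s - β^s) ξ̃`, and the scalar estimate
`|α^s - β^s| β ≤ max 1 s · α^s (α - β)` together with `|ξ̃| ≤ β` and `α - β ≤ |ξ - ξ̃|` bounds the
second term by a multiple of the first. Finally `α^s ≤ 2 (μ² + |ξ|² + |ξ̃|²)^(s/2)`, because the two
bases are comparable up to the factor `2` and `s ≥ -1`.
-/

open Real

theorem rpow_sub_rpow_le_of_one_le {a b s : ℝ} (hb : 0 < b) (hba : b ≤ a) (hs : 1 ≤ s) :
    a ^ s - b ^ s ≤ s * a ^ (s - 1) * (a - b) := by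
  have ha : 0 < a := hb.trans_le hba
  have bernoulli : 1 + s * (b / a - 1) ≤ (b / a) ^ s := by
    simpa using one_add_mul_self_le_rpow_one_add (s := b / a - 1) (by linarith [div_pos hb ha]) hs
  rw [div_rpow hb.le ha.le, le_div_iff₀ (rpow_pos_of_pos ha s)] at bernoulli
  have hsub : a ^ s = a ^ (s - 1) * a := by rw [rpow_sub_one ha.ne', div_mul_cancel₀ _ ha.ne']
  have hrescale : s * a ^ s * (b / a - 1) = s * a ^ (s - 1) * (b - a) := by
    rw [hsub]; field_simp
  nlinarith

theorem abs_rpow_sub_rpow_mul_le {a b s : ℝ} (hb : 0 < b) (hba : b ≤ a) (hs : -1 ≤ s) :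
    |a ^ s - b ^ s| * b ≤ max 1 s * a ^ s * (a - b) := by
  have ha : 0 < a := hb.trans_le hba
  have hpos : 0 ≤ a ^ s * (a - b) := mul_nonneg (rpow_nonneg ha.le s) (by linarith)
  rcases le_total s 0 with hs0 | hs0
  · -- `(b ^ s - a ^ s) * b ≤ a ^ s * (a - b)` rearranges to `b ^ (s + 1) ≤ a ^ (s + 1)`
    have hmono : b ^ (s + 1) ≤ a ^ (s + 1) := rpow_le_rpow hb.le hba (by linarith)
    rw [rpow_add_one ha.ne', rpow_add_one hb.ne'] at hmono
    rw [abs_of_nonpos (by linarith [rpow_le_rpow_of_nonpos hb hba hs0])]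
    nlinarith [le_max_left 1 s]
  have hab : b ^ s ≤ a ^ s := rpow_le_rpow hb.le hba hs0
  have hsa : a ^ s = a ^ (s - 1) * a := by rw [rpow_sub_one ha.ne', div_mul_cancel₀ _ ha.ne']
  rw [abs_of_nonneg (by linarith)]
  rcases le_total s 1 with hs1 | hs1
  · -- `(a ^ s - b ^ s) * b ≤ (a ^ s - b ^ s) * a ≤ a ^ s * (a - b)`, the last step being
    -- `a ^ (s - 1) ≤ b ^ (s - 1)`
    have hanti : a ^ (s - 1) ≤ b ^ (s - 1) := rpow_le_rpow_of_nonpos hb hba (by linarith)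
    have hsb : b ^ s = b ^ (s - 1) * b := by rw [rpow_sub_one hb.ne', div_mul_cancel₀ _ hb.ne']
    nlinarith [le_max_left 1 s, mul_le_mul_of_nonneg_left hba (sub_nonneg.2 hab),
      mul_le_mul_of_nonneg_right hanti (mul_nonneg ha.le hb.le)]
  · rw [max_eq_right hs1]
    calc (a ^ s - b ^ s) * b ≤ (s * a ^ (s - 1) * (a - b)) * a :=
          mul_le_mul (rpow_sub_rpow_le_of_one_le hb hba hs1) hba hb.le
            (by have := rpow_pos_of_pos ha (s - 1); positivity)
      _ = s * a ^ s * (a - b) := by rw [hsa]; ring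

theorem sqrt_add_sq_sub_sqrt_add_sq_le {c x y : ℝ} (hc : 0 ≤ c) (hy : 0 ≤ y) (hyx : y ≤ x) :
    √(c + x ^ 2) - √(c + y ^ 2) ≤ x - y := by
  have hy_le : y ≤ √(c + y ^ 2) := le_sqrt_of_sq_le (by linarith)
  have hsq := sq_sqrt (show 0 ≤ c + y ^ 2 by positivity)
  rw [sub_le_iff_le_add, sqrt_le_left (by linarith)]
  nlinarith

theorem rpow_le_two_mul_rpow {a b t : ℝ} (ha : 0 < a) (hab : a ≤ b) (hb : b ≤ 2 * a)
    (ht : -1 ≤ t) : a ^ t ≤ 2 * b ^ t := by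
  rcases le_total 0 t with ht0 | ht0
  · linarith [rpow_le_rpow ha.le hab ht0, rpow_nonneg (ha.le.trans hab) t]
  · have h2a : (2 * a) ^ t ≤ b ^ t := rpow_le_rpow_of_nonpos (ha.trans_le hab) hb ht0
    have h2 : (2 : ℝ)⁻¹ ≤ 2 ^ t := by
      simpa [rpow_neg_one] using rpow_le_rpow_of_exponent_le one_le_two ht
    rw [mul_rpow zero_le_two ha.le] at h2a
    nlinarith [rpow_pos_of_pos ha t]


section NormedSpace

variable {E : Type*} [NormedAddCommGroup E] [NormedSpace ℝ E] {μ s : ℝ}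

theorem norm_rpow_smul_sub_rpow_smul_le_of_norm_le (hμ : 0 < μ) (hs : -1 ≤ s) {ξ ξ' : E}
    (hξ : ‖ξ'‖ ≤ ‖ξ‖) :
    ‖(μ ^ 2 + ‖ξ‖ ^ 2) ^ (s / 2) • ξ - (μ ^ 2 + ‖ξ'‖ ^ 2) ^ (s / 2) • ξ'‖ ≤
      (1 + max 1 s) * (μ ^ 2 + ‖ξ‖ ^ 2) ^ (s / 2) * ‖ξ - ξ'‖ := by
  set α := √(μ ^ 2 + ‖ξ‖ ^ 2)
  set β := √(μ ^ 2 + ‖ξ'‖ ^ 2)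
  rw [rpow_div_two_eq_sqrt s (by positivity), rpow_div_two_eq_sqrt s (by positivity)]
  have hβ : 0 < β := sqrt_pos.2 (by positivity)
  have hβα : β ≤ α := sqrt_le_sqrt (by gcongr)
  have hξ'β : ‖ξ'‖ ≤ β := le_sqrt_of_sq_le (by linarith [sq_nonneg μ])
  have hαβ : α - β ≤ ‖ξ - ξ'‖ :=
    (sqrt_add_sq_sub_sqrt_add_sq_le (sq_nonneg μ) (norm_nonneg ξ') hξ).trans
      (norm_sub_norm_le ξ ξ')
  have hαs : 0 < α ^ s := rpow_pos_of_pos (hβ.trans_le hβα) s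
  have hsecond : |α ^ s - β ^ s| * ‖ξ'‖ ≤ max 1 s * α ^ s * ‖ξ - ξ'‖ :=
    calc |α ^ s - β ^ s| * ‖ξ'‖ ≤ |α ^ s - β ^ s| * β := by gcongr
      _ ≤ max 1 s * α ^ s * (α - β) := abs_rpow_sub_rpow_mul_le hβ hβα hs
      _ ≤ max 1 s * α ^ s * ‖ξ - ξ'‖ := by gcongr
  calc ‖α ^ s • ξ - β ^ s • ξ'‖ = ‖α ^ s • (ξ - ξ') + (α ^ s - β ^ s) • ξ'‖ := by
        congr 1; module
    _ ≤ α ^ s * ‖ξ - ξ'‖ + |α ^ s - β ^ s| * ‖ξ'‖ := by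
        refine (norm_add_le _ _).trans_eq ?_
        rw [norm_smul, norm_smul, norm_of_nonneg hαs.le, norm_eq_abs]
    _ ≤ α ^ s * ‖ξ - ξ'‖ + max 1 s * α ^ s * ‖ξ - ξ'‖ := by grw [hsecond]
    _ = (1 + max 1 s) * α ^ s * ‖ξ - ξ'‖ := by ring

theorem norm_rpow_smul_sub_rpow_smul_le (hμ : 0 < μ) (hs : -1 ≤ s) (ξ ξ' : E) :
    ‖(μ ^ 2 + ‖ξ‖ ^ 2) ^ (s / 2) • ξ - (μ ^ 2 + ‖ξ'‖ ^ 2) ^ (s / 2) • ξ'‖ ≤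
      2 * (1 + max 1 s) * (μ ^ 2 + ‖ξ‖ ^ 2 + ‖ξ'‖ ^ 2) ^ (s / 2) * ‖ξ - ξ'‖ := by
  wlog hξ : ‖ξ'‖ ≤ ‖ξ‖ generalizing ξ ξ'
  · rw [norm_sub_rev, norm_sub_rev ξ, add_right_comm]
    exact this ξ' ξ (le_of_not_ge hξ)
  have hA : 0 < μ ^ 2 + ‖ξ‖ ^ 2 := by positivity
  have hAS : (μ ^ 2 + ‖ξ‖ ^ 2) ^ (s / 2) ≤ 2 * (μ ^ 2 + ‖ξ‖ ^ 2 + ‖ξ'‖ ^ 2) ^ (s / 2) :=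
    rpow_le_two_mul_rpow hA (by nlinarith [sq_nonneg ‖ξ'‖])
      (by nlinarith [pow_le_pow_left₀ (norm_nonneg ξ') hξ 2, sq_nonneg μ]) (by linarith)
  calc _ ≤ (1 + max 1 s) * (μ ^ 2 + ‖ξ‖ ^ 2) ^ (s / 2) * ‖ξ - ξ'‖ :=
        norm_rpow_smul_sub_rpow_smul_le_of_norm_le hμ hs hξ
    _ ≤ (1 + max 1 s) * (2 * (μ ^ 2 + ‖ξ‖ ^ 2 + ‖ξ'‖ ^ 2) ^ (s / 2)) * ‖ξ - ξ'‖ := by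
        gcongr
    _ = 2 * (1 + max 1 s) * (μ ^ 2 + ‖ξ‖ ^ 2 + ‖ξ'‖ ^ 2) ^ (s / 2) * ‖ξ - ξ'‖ := by ring

end NormedSpace

/-- For `p > 1` there is `γ = γ(p) > 0` such that for every dimension `k`, every
`μ ∈ (0,1]` and all `ξ, ξ̃ ∈ ℝᵏ`:
`|(μ²+|ξ|²)^((p-2)/2) ξ − (μ²+|ξ̃|²)^((p-2)/2) ξ̃| ≤ γ (μ²+|ξ|²+|ξ̃|²)^((p-2)/2) |ξ−ξ̃|`. -/
theorem monotonicity_upper_bound (p : ℝ) (hp : 1 < p) :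
    ∃ γ : ℝ, 0 < γ ∧
      ∀ (k : ℕ) (μ : ℝ), μ ∈ Set.Ioc (0 : ℝ) 1 →
        ∀ ξ ξ' : EuclideanSpace ℝ (Fin k),
          ‖(μ ^ 2 + ‖ξ‖ ^ 2) ^ ((p - 2) / 2) • ξ - (μ ^ 2 + ‖ξ'‖ ^ 2) ^ ((p - 2) / 2) • ξ'‖ ≤
            γ * (μ ^ 2 + ‖ξ‖ ^ 2 + ‖ξ'‖ ^ 2) ^ ((p - 2) / 2) * ‖ξ - ξ'‖ :=
  ⟨2 * (1 + max 1 (p - 2)), by positivity, fun _ _ hμ ξ ξ' =>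
    norm_rpow_smul_sub_rpow_smul_le hμ.1 (by linarith) ξ ξ'⟩
end

section
/- Let μ ∈ (0,1], p > 1 and k ∈ ℕ. There exists a constant γ = γ(p) > 0 such that for all ξ, ξ̃ ∈ ℝᵏ one has ⟨ (μ² + |ξ|²)^{(p−2)/2} ξ − (μ² + |ξ̃|²)^{(p−2)/2} ξ̃ , ξ − ξ̃ ⟩ ≥ γ⁻¹ (μ² + |ξ|² + |ξ̃|²)^{(p−2)/2} |ξ − ξ̃|², where ⟨·,·⟩ and |·| denote the Euclidean inner product and norm on ℝᵏ. -/
open scoped RealInnerProductSpace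
open Real
set_option maxHeartbeats 1000000
lemma hasDerivAt_phi (μ q : ℝ) (hμ : 0 < μ) (x : ℝ) :
    HasDerivAt (fun x : ℝ => (μ^2+x^2)^q * x)
      ((μ^2+x^2)^(q-1) * (μ^2+(2*q+1)*x^2)) x := by
  have hb : (0:ℝ) < μ^2 + x^2 := by positivity
  have h1 : HasDerivAt (fun x : ℝ => μ^2 + x^2) (2*x) x := by
    simpa using ((hasDerivAt_pow 2 x).const_add (μ^2))
  have h2 := h1.rpow_const (p := q) (Or.inl hb.ne')
  have h3 := h2.mul (hasDerivAt_id x)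
  refine h3.congr_deriv ?_
  have : (μ^2+x^2)^q = (μ^2+x^2)^(q-1) * (μ^2+x^2) := by
    nth_rewrite 1 [show q = (q-1)+1 by ring]
    rw [Real.rpow_add hb, Real.rpow_one]
  rw [id_eq, this]; ring

lemma phi_diff_ge (μ q K l u : ℝ) (hμ : 0 < μ) (hlu : l ≤ u)
    (hK : ∀ x ∈ Set.Icc l u, K ≤ (μ^2+x^2)^(q-1) * (μ^2+(2*q+1)*x^2)) :
    K * (u - l) ≤ (μ^2+u^2)^q * u - (μ^2+l^2)^q * l := by
  set g : ℝ → ℝ := fun x => (μ^2+x^2)^q * x - K * x with hg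
  have hd : ∀ x : ℝ, HasDerivAt g ((μ^2+x^2)^(q-1) * (μ^2+(2*q+1)*x^2) - K) x := by
    intro x
    exact ((hasDerivAt_phi μ q hμ x).sub ((hasDerivAt_id x).const_mul K)).congr_deriv (by ring)
  have hmono : MonotoneOn g (Set.Icc l u) := by
    apply monotoneOn_of_deriv_nonneg (convex_Icc l u)
    · exact fun x hx => ((hd x).continuousAt).continuousWithinAt
    · exact fun x hx => ((hd x).differentiableAt).differentiableWithinAt
    · intro x hx
      rw [(hd x).deriv]
      have := hK x (interior_subset hx)
      linarith
  have := hmono (Set.left_mem_Icc.2 hlu) (Set.right_mem_Icc.2 hlu) hlu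
  simp only [hg] at this
  linarith

/-- helper: x^(q-1) * x = x^q for 0 < x -/
lemma rpow_pred_mul (x q : ℝ) (hx : 0 < x) : x^(q-1) * x = x^q := by
  nth_rewrite 2 [show q = (q-1)+1 by ring]
  rw [Real.rpow_add hx, Real.rpow_one]

/-- scalar monotonicity inequality -/
lemma scalar_ineq (μ q a b : ℝ) (hq : -(1/2 : ℝ) < q) (hμ : 0 < μ)
    (hb : 0 ≤ b) (hab : b ≤ a) :
    min (2*q+1) 1 * (2:ℝ)^(-2*|q|-1) * (μ^2+a^2+b^2)^q * (a-b) ≤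
      (μ^2+a^2)^q * a - (μ^2+b^2)^q * b := by
  have hT : (0:ℝ) < μ^2+a^2+b^2 := by positivity
  have hTq : (0:ℝ) < (μ^2+a^2+b^2)^q := Real.rpow_pos_of_pos hT q
  have hpow1 : (2:ℝ)^(-2*|q|-1) ≤ 1 :=
    Real.rpow_le_one_of_one_le_of_nonpos one_le_two (by have := abs_nonneg q; linarith)
  have hpow0 : (0:ℝ) < (2:ℝ)^(-2*|q|-1) := Real.rpow_pos_of_pos two_pos _
  have hminpos : (0:ℝ) < min (2*q+1) 1 := lt_min (by linarith) one_pos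
  rcases le_or_gt 0 q with hq0 | hq0
  · -- case q ≥ 0
    have habs : |q| = q := abs_of_nonneg hq0
    set m := (a+b)/2 with hm
    have hbm : b ≤ m := by rw [hm]; linarith
    have hma : m ≤ a := by rw [hm]; linarith
    have hm0 : 0 ≤ m := by linarith
    have ha0 : 0 ≤ a := le_trans hb hab
    have stepA : (0:ℝ) * (m - b) ≤ (μ^2+m^2)^q * m - (μ^2+b^2)^q * b := by
      apply phi_diff_ge μ q 0 b m hμ hbm
      intro x hx
      have h1 : (0:ℝ) < (μ^2+x^2)^(q-1) := Real.rpow_pos_of_pos (by positivity) _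
      have h2 : (0:ℝ) ≤ μ^2+(2*q+1)*x^2 := by nlinarith [sq_nonneg x, sq_nonneg μ]
      exact mul_nonneg h1.le h2
    have key : (2:ℝ)^(-2*q) * (μ^2+a^2+b^2)^q ≤ (μ^2+m^2)^q := by
      have hmpos : (0:ℝ) < μ^2+m^2 := by positivity
      have h4T : (μ^2+a^2+b^2) ≤ 4*(μ^2+m^2) := by
        have hm2 : m^2 = (a+b)^2/4 := by rw [hm]; ring
        nlinarith [mul_nonneg ha0 hb, sq_nonneg μ]
      have h1 : (μ^2+a^2+b^2)^q ≤ (4*(μ^2+m^2))^q := Real.rpow_le_rpow hT.le h4T hq0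
      have h2 : (4*(μ^2+m^2))^q = 4^q * (μ^2+m^2)^q :=
        Real.mul_rpow (by norm_num) hmpos.le
      have h3 : (2:ℝ)^(-2*q) * (4:ℝ)^q = 1 := by
        rw [show (4:ℝ) = 2*2 by norm_num, Real.mul_rpow two_pos.le two_pos.le,
            ← mul_assoc, ← Real.rpow_add two_pos, ← Real.rpow_add two_pos,
            show -2*q + q + q = (0:ℝ) by ring, Real.rpow_zero]
      calc (2:ℝ)^(-2*q) * (μ^2+a^2+b^2)^q
          ≤ (2:ℝ)^(-2*q) * (4^q * (μ^2+m^2)^q) := by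
            rw [← h2]
            exact mul_le_mul_of_nonneg_left h1 (Real.rpow_nonneg two_pos.le _)
        _ = (μ^2+m^2)^q := by rw [← mul_assoc, h3, one_mul]
    have stepB : (2:ℝ)^(-2*q) * (μ^2+a^2+b^2)^q * (a - m)
        ≤ (μ^2+a^2)^q * a - (μ^2+m^2)^q * m := by
      apply phi_diff_ge μ q _ m a hμ hma
      intro x hx
      have hx0 : 0 ≤ x := le_trans hm0 hx.1
      have hbx : (0:ℝ) < μ^2+x^2 := by positivity
      have hxq : (μ^2+m^2)^q ≤ (μ^2+x^2)^q := by
        apply Real.rpow_le_rpow (by positivity) ?_ hq0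
        nlinarith [mul_self_le_mul_self hm0 hx.1]
      have hder : (μ^2+x^2)^q ≤ (μ^2+x^2)^(q-1)*(μ^2+(2*q+1)*x^2) := by
        rw [← rpow_pred_mul _ q hbx]
        have hp := Real.rpow_pos_of_pos hbx (q-1)
        nlinarith [mul_le_mul_of_nonneg_left (show μ^2+x^2 ≤ μ^2+(2*q+1)*x^2 by nlinarith [sq_nonneg x]) hp.le]
      exact le_trans (le_trans key hxq) hder
    have hε : min (2*q+1) 1 * (2:ℝ)^(-2*|q|-1) * (μ^2+a^2+b^2)^q * (a-b)
        ≤ (2:ℝ)^(-2*q) * (μ^2+a^2+b^2)^q * (a - m) := by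
      have h2q : (2:ℝ)^(-2*|q|-1) = (2:ℝ)^(-2*q) / 2 := by
        rw [habs, show -2*q-1 = -2*q + (-1) by ring, Real.rpow_add two_pos,
            Real.rpow_neg_one]
        ring
      have ham : a - m = (a-b)/2 := by rw [hm]; ring
      have h2qpos : (0:ℝ) < (2:ℝ)^(-2*q) := Real.rpow_pos_of_pos two_pos _
      have hX : (0:ℝ) ≤ (2:ℝ)^(-2*q) * (μ^2+a^2+b^2)^q * ((a-b)/2) := by
        apply mul_nonneg (mul_nonneg h2qpos.le hTq.le); linarith
      have hmin1 : min (2*q+1) 1 ≤ 1 := min_le_right _ _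
      rw [h2q, ham]
      nlinarith [mul_le_mul_of_nonneg_right hmin1 hX]
    have hA : (0:ℝ) ≤ (μ^2+m^2)^q * m - (μ^2+b^2)^q * b := by linarith [stepA]
    linarith [stepB, hε, hA]
  · -- case q < 0
    have habs : |q| = -q := abs_of_neg hq0
    have hq1 : (0:ℝ) < 2*q+1 := by linarith
    apply le_trans ?_ (phi_diff_ge μ q ((2*q+1)*(μ^2+a^2+b^2)^q) b a hμ hab ?_)
    · have hle : min (2*q+1) 1 * (2:ℝ)^(-2*|q|-1) ≤ 2*q+1 := by
        have h1 := min_le_left (2*q+1) 1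
        nlinarith [hpow0, hpow1, hminpos]
      nlinarith [mul_le_mul_of_nonneg_right hle
        (mul_nonneg hTq.le (sub_nonneg.2 hab))]
    · intro x hx
      have hx0 : 0 ≤ x := le_trans hb hx.1
      have hbx : (0:ℝ) < μ^2+x^2 := by positivity
      have h2 : (2*q+1)*(μ^2+x^2)^q ≤ (μ^2+x^2)^(q-1)*(μ^2+(2*q+1)*x^2) := by
        rw [← rpow_pred_mul _ q hbx]
        have hp := Real.rpow_pos_of_pos hbx (q-1)
        nlinarith [mul_le_mul_of_nonneg_left
          (show (2*q+1)*(μ^2+x^2) ≤ μ^2+(2*q+1)*x^2 by nlinarith [sq_nonneg μ]) hp.le]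
      have h3 : (μ^2+a^2+b^2)^q ≤ (μ^2+x^2)^q := by
        apply Real.rpow_le_rpow_of_nonpos hbx ?_ hq0.le
        nlinarith [mul_self_le_mul_self hx0 hx.2, sq_nonneg b]
      nlinarith [mul_le_mul_of_nonneg_left h3 hq1.le]

lemma coeff_ineq (μ q a b : ℝ) (hq : -(1/2:ℝ) < q) (hμ : 0 < μ)
    (hb : 0 ≤ b) (hab : b ≤ a) :
    2 * (min (2*q+1) 1 * (2:ℝ)^(-2*|q|-1)) * (μ^2+a^2+b^2)^q ≤
      (μ^2+a^2)^q + (μ^2+b^2)^q := by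
  have hT : (0:ℝ) < μ^2+a^2+b^2 := by positivity
  have hs : (0:ℝ) < μ^2+a^2 := by positivity
  have ht : (0:ℝ) < μ^2+b^2 := by positivity
  have hTq := Real.rpow_pos_of_pos hT q
  have hsq := Real.rpow_pos_of_pos hs q
  have htq := Real.rpow_pos_of_pos ht q
  have hpow1 : (2:ℝ)^(-2*|q|-1) ≤ 1 :=
    Real.rpow_le_one_of_one_le_of_nonpos one_le_two
      (by have := abs_nonneg q; linarith)
  have hpow0 : (0:ℝ) < (2:ℝ)^(-2*|q|-1) := Real.rpow_pos_of_pos two_pos _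
  have hminpos : (0:ℝ) < min (2*q+1) 1 := lt_min (by linarith) one_pos
  have hmin1 : min (2*q+1) 1 ≤ 1 := min_le_right _ _
  rcases le_or_gt 0 q with hq0 | hq0
  · -- q ≥ 0 : T^q ≤ 2^q s^q and 2*2^{-2q-1}*2^q = 2^{-q} ≤ 1
    have habs : |q| = q := abs_of_nonneg hq0
    have hTs : (μ^2+a^2+b^2)^q ≤ (2:ℝ)^q * (μ^2+a^2)^q := by
      rw [← Real.mul_rpow two_pos.le hs.le]
      exact Real.rpow_le_rpow hT.le (by nlinarith [sq_nonneg μ]) hq0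
    have hE : 2 * (2:ℝ)^(-2*|q|-1) * (2:ℝ)^q ≤ 1 := by
      have e1 : 2 * (2:ℝ)^(-2*|q|-1) * (2:ℝ)^q = (2:ℝ)^(-q) := by
        rw [habs]
        nth_rewrite 1 [show (2:ℝ) = (2:ℝ)^(1:ℝ) from (Real.rpow_one 2).symm]
        rw [← Real.rpow_add two_pos, ← Real.rpow_add two_pos]
        ring_nf
      rw [e1]
      exact Real.rpow_le_one_of_one_le_of_nonpos one_le_two (by linarith)
    have h2q := Real.rpow_pos_of_pos two_pos q
    nlinarith [mul_le_mul_of_nonneg_left hTs (by positivity :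
        (0:ℝ) ≤ 2 * (min (2*q+1) 1 * (2:ℝ)^(-2*|q|-1))),
      mul_le_mul_of_nonneg_right hE hsq.le,
      mul_le_mul_of_nonneg_right
        (mul_le_mul_of_nonneg_right hmin1 hpow0.le)
        (mul_pos h2q hsq).le]
  · -- q < 0 : T^q ≤ s^q and T^q ≤ t^q
    have h1 : (μ^2+a^2+b^2)^q ≤ (μ^2+a^2)^q :=
      Real.rpow_le_rpow_of_nonpos hs (by nlinarith [sq_nonneg b]) hq0.le
    have h2 : (μ^2+a^2+b^2)^q ≤ (μ^2+b^2)^q :=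
      Real.rpow_le_rpow_of_nonpos ht (by nlinarith [sq_nonneg a]) hq0.le
    nlinarith [mul_le_mul_of_nonneg_right
        (mul_le_mul_of_nonneg_right hmin1 hpow0.le) hTq.le]

lemma main_aux (q : ℝ) (hq : -(1/2:ℝ) < q) (k : ℕ) (μ : ℝ) (hμ : 0 < μ)
    (ξ ξ' : EuclideanSpace ℝ (Fin k)) (h : ‖ξ'‖ ≤ ‖ξ‖) :
    min (2*q+1) 1 * (2:ℝ)^(-2*|q|-1) * (μ^2+‖ξ‖^2+‖ξ'‖^2)^q * ‖ξ - ξ'‖^2 ≤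
      ⟪(μ^2+‖ξ‖^2)^q • ξ - (μ^2+‖ξ'‖^2)^q • ξ', ξ - ξ'⟫ := by
  set a := ‖ξ‖
  set b := ‖ξ'‖
  have hinner : ⟪(μ^2+a^2)^q • ξ - (μ^2+b^2)^q • ξ', ξ - ξ'⟫ =
      (μ^2+a^2)^q * a^2 + (μ^2+b^2)^q * b^2
        - ((μ^2+a^2)^q + (μ^2+b^2)^q) * ⟪ξ,ξ'⟫ := by
    simp only [inner_sub_left, inner_sub_right, real_inner_smul_left,
      real_inner_self_eq_norm_sq, real_inner_comm ξ' ξ]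
    ring
  have hnorm : ‖ξ - ξ'‖^2 = a^2 - 2*⟪ξ,ξ'⟫ + b^2 := norm_sub_sq_real ξ ξ'
  have hcs : ⟪ξ,ξ'⟫ ≤ a*b := real_inner_le_norm ξ ξ'
  have hscalar := scalar_ineq μ q a b hq hμ (norm_nonneg ξ') h
  have hcoeff := coeff_ineq μ q a b hq hμ (norm_nonneg ξ') h
  rw [hinner, hnorm]
  have H1 : (0:ℝ) ≤ ((μ^2+a^2)^q * a - (μ^2+b^2)^q * b
      - min (2*q+1) 1 * (2:ℝ)^(-2*|q|-1) * (μ^2+a^2+b^2)^q * (a-b)) * (a-b) :=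
    mul_nonneg (by linarith) (by linarith)
  have H2 : (0:ℝ) ≤ ((μ^2+a^2)^q + (μ^2+b^2)^q
      - 2 * (min (2*q+1) 1 * (2:ℝ)^(-2*|q|-1)) * (μ^2+a^2+b^2)^q) * (a*b - ⟪ξ,ξ'⟫) :=
    mul_nonneg (by linarith) (by linarith)
  nlinarith [H1, H2]

/-- For `p > 1` there is `γ = γ(p) > 0` such that for every dimension `k`, every
`μ ∈ (0,1]` and all `ξ, ξ̃ ∈ ℝᵏ`:
`⟨(μ²+|ξ|²)^((p-2)/2) ξ − (μ²+|ξ̃|²)^((p-2)/2) ξ̃, ξ − ξ̃⟩ ≥ γ⁻¹ (μ²+|ξ|²+|ξ̃|²)^((p-2)/2) |ξ−ξ̃|²`. -/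
theorem monotonicity_lower_bound (p : ℝ) (hp : 1 < p) :
    ∃ γ : ℝ, 0 < γ ∧
      ∀ (k : ℕ) (μ : ℝ), μ ∈ Set.Ioc (0 : ℝ) 1 →
        ∀ ξ ξ' : EuclideanSpace ℝ (Fin k),
          γ⁻¹ * (μ ^ 2 + ‖ξ‖ ^ 2 + ‖ξ'‖ ^ 2) ^ ((p - 2) / 2) * ‖ξ - ξ'‖ ^ 2 ≤
            ⟪(μ ^ 2 + ‖ξ‖ ^ 2) ^ ((p - 2) / 2) • ξ - (μ ^ 2 + ‖ξ'‖ ^ 2) ^ ((p - 2) / 2) • ξ',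
              ξ - ξ'⟫ := by
  set q : ℝ := (p-2)/2 with hqdef
  have hq : -(1/2:ℝ) < q := by rw [hqdef]; linarith
  have hεpos : (0:ℝ) < min (2*q+1) 1 * (2:ℝ)^(-2*|q|-1) :=
    mul_pos (lt_min (by linarith) one_pos) (Real.rpow_pos_of_pos two_pos _)
  refine ⟨(min (2*q+1) 1 * (2:ℝ)^(-2*|q|-1))⁻¹, inv_pos.2 hεpos, ?_⟩
  intro k μ hμ ξ ξ'
  rw [inv_inv]
  rcases le_total ‖ξ'‖ ‖ξ‖ with h | h
  · exact main_aux q hq k μ hμ.1 ξ ξ' h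
  · have H := main_aux q hq k μ hμ.1 ξ' ξ h
    have h1 : ⟪(μ^2+‖ξ'‖^2)^q • ξ' - (μ^2+‖ξ‖^2)^q • ξ, ξ' - ξ⟫ =
        ⟪(μ^2+‖ξ‖^2)^q • ξ - (μ^2+‖ξ'‖^2)^q • ξ', ξ - ξ'⟫ := by
      rw [show (μ^2+‖ξ'‖^2)^q • ξ' - (μ^2+‖ξ‖^2)^q • ξ
            = -((μ^2+‖ξ‖^2)^q • ξ - (μ^2+‖ξ'‖^2)^q • ξ') by abel,
          show ξ' - ξ = -(ξ - ξ') by abel, inner_neg_neg]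
    have h2 : μ^2+‖ξ'‖^2+‖ξ‖^2 = μ^2+‖ξ‖^2+‖ξ'‖^2 := by ring
    rw [h2, norm_sub_rev ξ' ξ, h1] at H
    exact H
end

section
/- Let p > 1 and q > 0 satisfy 0 < p − 1 ≤ q, and let c ∈ (0,1). Then ∫₀¹ q s^{q−1} (s + c)^{1−p} ds ≤ (q+1) · 2^{q+1−p+(1−q)₊} · ln((1+c)/c), where (1−q)₊ := max{1−q, 0}. -/
open Real intervalIntegral

/-- For `p > 1`, `q > 0` with `p − 1 ≤ q`, and `c ∈ (0,1)`:
`∫₀¹ q s^(q−1) (s+c)^(1−p) ds ≤ (q+1) 2^(q+1−p+(1−q)₊) ln((1+c)/c)`. -/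
theorem aux_log_integral_bound (p q c : ℝ) (hp : 1 < p) (hq : 0 < q) (hpq : p - 1 ≤ q)
    (hc : c ∈ Set.Ioo (0 : ℝ) 1) :
    (∫ s in (0 : ℝ)..1, q * s ^ (q - 1) * (s + c) ^ (1 - p)) ≤
      (q + 1) * (2 : ℝ) ^ (q + 1 - p + max (1 - q) 0) * Real.log ((1 + c) / c) := by
  obtain ⟨hc0, hc1⟩ := hc
  -- continuity facts
  have hcont : ∀ r : ℝ, ContinuousOn (fun s : ℝ => (s + c) ^ r) (Set.Icc (0 : ℝ) 1) := by
    intro r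
    apply ContinuousOn.rpow_const ((continuous_id.add continuous_const).continuousOn)
    intro x hx
    have := hx.1
    exact Or.inl (by show x + c ≠ 0; intro h; linarith)
  -- the log integral
  have Ilog : ∀ a b : ℝ, 0 < a + c → a ≤ b →
      (∫ s in a..b, (s + c) ^ (-1 : ℝ)) = Real.log ((b + c) / (a + c)) := by
    intro a b ha hab
    have h1 : (fun s : ℝ => (s + c) ^ (-1 : ℝ)) = fun s => 1 / (s + c) :=
      funext fun s => by rw [Real.rpow_neg_one, one_div]
    rw [h1, intervalIntegral.integral_comp_add_right (fun x => 1 / x) c]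
    apply integral_one_div
    rw [Set.uIcc_of_le (by linarith)]
    intro h
    exact absurd h.1 (by linarith)
  -- integrability of the main integrand on [0,1]
  have hIq : IntervalIntegrable (fun s : ℝ => q * s ^ (q - 1)) MeasureTheory.volume 0 1 :=
    (intervalIntegral.intervalIntegrable_rpow' (by linarith : (-1 : ℝ) < q - 1)).const_mul q
  have hInt : IntervalIntegrable (fun s : ℝ => q * s ^ (q - 1) * (s + c) ^ (1 - p))
      MeasureTheory.volume 0 1 := by
    apply hIq.mul_continuousOn
    rw [Set.uIcc_of_le (by norm_num : (0:ℝ) ≤ 1)]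
    exact hcont (1 - p)
  have hIinv : ∀ r : ℝ, IntervalIntegrable (fun s : ℝ => r * (s + c) ^ (-1 : ℝ))
      MeasureTheory.volume 0 1 := by
    intro r
    apply ContinuousOn.intervalIntegrable
    rw [Set.uIcc_of_le (by norm_num : (0:ℝ) ≤ 1)]
    exact (continuousOn_const.mul (hcont (-1)))
  have hscpos : ∀ s : ℝ, 0 ≤ s → 0 < s + c := fun s hs => by linarith
  have hL0 : 0 ≤ Real.log ((1 + c) / c) :=
    Real.log_nonneg (by rw [le_div_iff₀ hc0]; linarith)
  have h2pos : ∀ r : ℝ, (0:ℝ) < (2:ℝ) ^ r := fun r => Real.rpow_pos_of_pos two_pos r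
  -- shared pointwise fact
  have hkey2 : ∀ s : ℝ, 0 ≤ s → s ≤ 1 →
      (s + c) ^ (q - 1) * (s + c) ^ (1 - p) ≤ 2 ^ (q + 1 - p) * (s + c) ^ (-1 : ℝ) := by
    intro s hs0 hs1
    have hsc := hscpos s hs0
    rw [← Real.rpow_add hsc]
    have e : q - 1 + (1 - p) = (q + 1 - p) + (-1) := by ring
    rw [e, Real.rpow_add hsc]
    exact mul_le_mul_of_nonneg_right
      (Real.rpow_le_rpow hsc.le (by linarith) (by linarith))
      (Real.rpow_nonneg hsc.le _)
  rcases le_or_gt 1 q with hq1 | hq1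
  · -- case q ≥ 1
    have hmax : max (1 - q) 0 = 0 := max_eq_right (by linarith)
    rw [hmax, add_zero]
    have hpt : ∀ s ∈ Set.Icc (0:ℝ) 1,
        q * s ^ (q - 1) * (s + c) ^ (1 - p) ≤ q * 2 ^ (q + 1 - p) * (s + c) ^ (-1 : ℝ) := by
      intro s ⟨hs0, hs1⟩
      have hsc := hscpos s hs0
      have h1 : s ^ (q - 1) ≤ (s + c) ^ (q - 1) :=
        Real.rpow_le_rpow hs0 (by linarith) (by linarith)
      calc q * s ^ (q - 1) * (s + c) ^ (1 - p)
          ≤ q * (s + c) ^ (q - 1) * (s + c) ^ (1 - p) := by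
            apply mul_le_mul_of_nonneg_right _ (Real.rpow_nonneg hsc.le _)
            exact mul_le_mul_of_nonneg_left h1 hq.le
        _ = q * ((s + c) ^ (q - 1) * (s + c) ^ (1 - p)) := by ring
        _ ≤ q * (2 ^ (q + 1 - p) * (s + c) ^ (-1 : ℝ)) :=
            mul_le_mul_of_nonneg_left (hkey2 s hs0 hs1) hq.le
        _ = q * 2 ^ (q + 1 - p) * (s + c) ^ (-1 : ℝ) := by ring
    calc (∫ s in (0:ℝ)..1, q * s ^ (q - 1) * (s + c) ^ (1 - p))
        ≤ ∫ s in (0:ℝ)..1, q * 2 ^ (q + 1 - p) * (s + c) ^ (-1 : ℝ) :=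
          intervalIntegral.integral_mono_on (by norm_num) hInt (hIinv _) hpt
      _ = q * 2 ^ (q + 1 - p) * ∫ s in (0:ℝ)..1, (s + c) ^ (-1 : ℝ) :=
          intervalIntegral.integral_const_mul _ _
      _ = q * 2 ^ (q + 1 - p) * Real.log ((1 + c) / c) := by
          rw [Ilog 0 1 (by linarith) (by norm_num), zero_add]
      _ ≤ (q + 1) * 2 ^ (q + 1 - p) * Real.log ((1 + c) / c) := by
          apply mul_le_mul_of_nonneg_right _ hL0
          exact mul_le_mul_of_nonneg_right (by linarith) (h2pos _).le
  · -- case q < 1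
    have hmax : max (1 - q) 0 = 1 - q := max_eq_left (by linarith)
    have hexp : q + 1 - p + max (1 - q) 0 = 2 - p := by rw [hmax]; ring
    rw [hexp]
    -- split integral at c
    have hI1 : IntervalIntegrable (fun s : ℝ => q * s ^ (q - 1) * (s + c) ^ (1 - p))
        MeasureTheory.volume 0 c := hInt.mono_set (by
      rw [Set.uIcc_of_le hc0.le, Set.uIcc_of_le (by norm_num : (0:ℝ) ≤ 1)]
      exact Set.Icc_subset_Icc le_rfl hc1.le)
    have hI2 : IntervalIntegrable (fun s : ℝ => q * s ^ (q - 1) * (s + c) ^ (1 - p))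
        MeasureTheory.volume c 1 := hInt.mono_set (by
      rw [Set.uIcc_of_le hc1.le, Set.uIcc_of_le (by norm_num : (0:ℝ) ≤ 1)]
      exact Set.Icc_subset_Icc hc0.le le_rfl)
    have hsplit : (∫ s in (0:ℝ)..1, q * s ^ (q - 1) * (s + c) ^ (1 - p)) =
        (∫ s in (0:ℝ)..c, q * s ^ (q - 1) * (s + c) ^ (1 - p)) +
        ∫ s in c..(1:ℝ), q * s ^ (q - 1) * (s + c) ^ (1 - p) :=
      (intervalIntegral.integral_add_adjacent_intervals hI1 hI2).symm
    -- first piece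
    have hA : (∫ s in (0:ℝ)..c, q * s ^ (q - 1) * (s + c) ^ (1 - p)) ≤ c ^ (q + 1 - p) := by
      have hIg : IntervalIntegrable (fun s : ℝ => q * s ^ (q - 1) * c ^ (1 - p))
          MeasureTheory.volume 0 c :=
        ((intervalIntegral.intervalIntegrable_rpow'
          (by linarith : (-1 : ℝ) < q - 1)).const_mul q).mul_const _
      have hIf : IntervalIntegrable (fun s : ℝ => q * s ^ (q - 1) * (s + c) ^ (1 - p))
          MeasureTheory.volume 0 c := hI1
      have hpt : ∀ s ∈ Set.Icc (0:ℝ) c,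
          q * s ^ (q - 1) * (s + c) ^ (1 - p) ≤ q * s ^ (q - 1) * c ^ (1 - p) := by
        intro s ⟨hs0, _⟩
        apply mul_le_mul_of_nonneg_left
          (Real.rpow_le_rpow_of_nonpos hc0 (by linarith) (by linarith))
        exact mul_nonneg hq.le (Real.rpow_nonneg hs0 _)
      have hval : (∫ s in (0:ℝ)..c, q * s ^ (q - 1) * c ^ (1 - p)) = c ^ (q + 1 - p) := by
        have e : (fun s : ℝ => q * s ^ (q - 1) * c ^ (1 - p)) =
            fun s : ℝ => (q * c ^ (1 - p)) * s ^ (q - 1) := funext fun s => by ring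
        rw [e, intervalIntegral.integral_const_mul,
          integral_rpow (Or.inl (by linarith : (-1:ℝ) < q - 1))]
        rw [sub_add_cancel, Real.zero_rpow hq.ne', sub_zero]
        rw [show q + 1 - p = (1 - p) + q by ring, Real.rpow_add hc0]
        field_simp
      calc (∫ s in (0:ℝ)..c, q * s ^ (q - 1) * (s + c) ^ (1 - p))
          ≤ ∫ s in (0:ℝ)..c, q * s ^ (q - 1) * c ^ (1 - p) :=
            intervalIntegral.integral_mono_on hc0.le hIf hIg hpt
        _ = c ^ (q + 1 - p) := hval
    -- second piece
    have hB : (∫ s in c..(1:ℝ), q * s ^ (q - 1) * (s + c) ^ (1 - p)) ≤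
        q * 2 ^ (2 - p) * Real.log ((1 + c) / (c + c)) := by
      have hIg : IntervalIntegrable (fun s : ℝ => q * 2 ^ (2 - p) * (s + c) ^ (-1 : ℝ))
          MeasureTheory.volume c 1 := (hIinv _).mono_set (by
        rw [Set.uIcc_of_le hc1.le, Set.uIcc_of_le (by norm_num : (0:ℝ) ≤ 1)]
        exact Set.Icc_subset_Icc hc0.le le_rfl)
      have hpt : ∀ s ∈ Set.Icc c (1:ℝ),
          q * s ^ (q - 1) * (s + c) ^ (1 - p) ≤ q * 2 ^ (2 - p) * (s + c) ^ (-1 : ℝ) := by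
        intro s ⟨hsc', hs1⟩
        have hs0 : (0:ℝ) ≤ s := le_trans hc0.le hsc'
        have hsc := hscpos s hs0
        have h1 : s ^ (q - 1) ≤ 2 ^ (1 - q) * (s + c) ^ (q - 1) := by
          have h2 : s ^ (q - 1) ≤ ((s + c) / 2) ^ (q - 1) :=
            Real.rpow_le_rpow_of_nonpos (by linarith) (by linarith) (by linarith)
          have h3 : ((s + c) / 2) ^ (q - 1) = 2 ^ (1 - q) * (s + c) ^ (q - 1) := by
            rw [Real.div_rpow hsc.le (by norm_num : (0:ℝ) ≤ 2),
              show (1 : ℝ) - q = -(q - 1) by ring, Real.rpow_neg (by norm_num : (0:ℝ) ≤ 2)]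
            field_simp
          linarith [h2, h3.le]
        have h4 : (s + c) ^ (q - 1) * (s + c) ^ (1 - p) ≤ 2 ^ (q + 1 - p) * (s + c) ^ (-1 : ℝ) :=
          hkey2 s hs0 hs1
        have hx1 : (0:ℝ) ≤ (s + c) ^ (1 - p) := Real.rpow_nonneg hsc.le _
        calc q * s ^ (q - 1) * (s + c) ^ (1 - p)
            ≤ q * (2 ^ (1 - q) * (s + c) ^ (q - 1)) * (s + c) ^ (1 - p) := by
              apply mul_le_mul_of_nonneg_right _ hx1
              exact mul_le_mul_of_nonneg_left h1 hq.le
          _ = (q * 2 ^ (1 - q)) * ((s + c) ^ (q - 1) * (s + c) ^ (1 - p)) := by ring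
          _ ≤ (q * 2 ^ (1 - q)) * (2 ^ (q + 1 - p) * (s + c) ^ (-1 : ℝ)) :=
              mul_le_mul_of_nonneg_left h4 (mul_nonneg hq.le (h2pos _).le)
          _ = q * (2 ^ (1 - q) * 2 ^ (q + 1 - p)) * (s + c) ^ (-1 : ℝ) := by ring
          _ = q * 2 ^ (2 - p) * (s + c) ^ (-1 : ℝ) := by
              rw [← Real.rpow_add two_pos, show (1:ℝ) - q + (q + 1 - p) = 2 - p by ring]
      calc (∫ s in c..(1:ℝ), q * s ^ (q - 1) * (s + c) ^ (1 - p))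
          ≤ ∫ s in c..(1:ℝ), q * 2 ^ (2 - p) * (s + c) ^ (-1 : ℝ) :=
            intervalIntegral.integral_mono_on hc1.le hI2 hIg hpt
        _ = q * 2 ^ (2 - p) * ∫ s in c..(1:ℝ), (s + c) ^ (-1 : ℝ) :=
            intervalIntegral.integral_const_mul _ _
        _ = q * 2 ^ (2 - p) * Real.log ((1 + c) / (c + c)) := by
            rw [Ilog c 1 (by linarith) hc1.le]
    -- final arithmetic
    rw [hsplit]
    set L := Real.log ((1 + c) / c) with hLdef
    have e1 : Real.log ((1 + c) / (c + c)) = L - Real.log 2 := by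
      rw [hLdef, show c + c = 2 * c by ring,
        Real.log_div (by linarith) (by positivity),
        Real.log_div (by linarith) (by linarith),
        Real.log_mul (by norm_num) (by linarith)]
      ring
    have hca : c ^ (q + 1 - p) ≤ 1 :=
      Real.rpow_le_one hc0.le hc1.le (by linarith)
    have hL2 : Real.log 2 ≤ L := by
      apply Real.log_le_log two_pos
      rw [le_div_iff₀ hc0]; linarith
    have hlog2 : (0.6931471803 : ℝ) < Real.log 2 := Real.log_two_gt_d9
    -- Bernoulli: 2^q ≤ 1 + q for q ∈ [0,1]
    have hbern : (2:ℝ) ^ q ≤ 1 + q := by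
      have hcv := convexOn_exp.2 (Set.mem_univ (0:ℝ)) (Set.mem_univ (Real.log 2))
        (by linarith : (0:ℝ) ≤ 1 - q) hq.le (by ring)
      simp only [smul_eq_mul, mul_zero, zero_add, Real.exp_zero,
        Real.exp_log two_pos] at hcv
      rw [Real.rpow_def_of_pos two_pos, mul_comm]
      linarith
    have hkey : (2:ℝ) ≤ 2 ^ (1 - q) * (1 + q) := by
      have h2q : (0:ℝ) < (2:ℝ) ^ q := h2pos q
      have e : (2:ℝ) ^ (1 - q) = 2 / 2 ^ q := by
        rw [Real.rpow_sub two_pos, Real.rpow_one]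
      rw [e, div_mul_eq_mul_div, le_div_iff₀ h2q]
      nlinarith
    have hmono : (2:ℝ) ^ (1 - q) ≤ 2 ^ (2 - p) :=
      Real.rpow_le_rpow_of_exponent_le one_le_two (by linarith)
    have h2p := h2pos (2 - p)
    have h1q := h2pos (1 - q)
    rw [e1] at hB
    -- goal: c^(q+1-p) + q*2^(2-p)*(L - log 2) ≤ (q+1)*2^(2-p)*L
    have key : (1:ℝ) ≤ 2 ^ (2 - p) * L + q * 2 ^ (2 - p) * Real.log 2 := by
      have s1 : 2 * Real.log 2 ≤ (2 ^ (1 - q) * (1 + q)) * Real.log 2 :=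
        mul_le_mul_of_nonneg_right hkey (by linarith)
      have s2 : (2 ^ (1 - q) * (1 + q)) * Real.log 2 ≤
          (2 ^ (2 - p) * (1 + q)) * Real.log 2 := by
        apply mul_le_mul_of_nonneg_right _ (by linarith)
        exact mul_le_mul_of_nonneg_right hmono (by linarith)
      have s3 : (2 ^ (2 - p) * (1 + q)) * Real.log 2 ≤
          2 ^ (2 - p) * L + q * 2 ^ (2 - p) * Real.log 2 := by
        have : 2 ^ (2 - p) * Real.log 2 ≤ 2 ^ (2 - p) * L :=
          mul_le_mul_of_nonneg_left hL2 h2p.le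
        nlinarith
      linarith
    nlinarith [key, hca, hA, hB, mul_nonneg (mul_nonneg hq.le h2p.le) (sub_nonneg.2 hL2)]
end

section
/- (ODE comparison for the extinction estimate.) Let p > 1 and q > 0 satisfy p − 1 < q, let μ > 0, and let v : [0, ∞) → [0, ∞) be continuous with v(0) > 0. Assume that v(t₂) − v(t₁) ≤ −μ ∫_{t₁}^{t₂} v(τ)^{p/(q+1)} dτ for all 0 ≤ t₁ ≤ t₂. Then for every t ≥ 0, v(t) ≤ v(0) · [ 1 − (μ(q+1−p) / ((q+1) · v(0)^{(q+1−p)/(q+1)})) · t ]₊^{(q+1)/(q+1−p)}. -/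
set_option maxHeartbeats 1000000

lemma concave_tangent {x y α : ℝ} (hy : 0 < y) (hx : 0 ≤ x)
    (hα0 : 0 < α) (hα1 : α < 1) :
    x ^ (1 - α) ≤ y ^ (1 - α) + (1 - α) * y ^ (-α) * (x - y) := by
  have hr0 : 0 ≤ x / y := div_nonneg hx hy.le
  have hgm := Real.geom_mean_le_arith_mean2_weighted (by linarith : (0:ℝ) ≤ 1 - α)
    hα0.le hr0 zero_le_one (by ring)
  rw [Real.one_rpow, mul_one, mul_one] at hgm
  have hy1 : (0:ℝ) < y ^ (1 - α) := Real.rpow_pos_of_pos hy _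
  have hsplit : y ^ (1 - α) = y ^ (-α) * y := by
    rw [show y ^ (-α) * y = y ^ (-α) * y ^ (1:ℝ) by rw [Real.rpow_one],
      ← Real.rpow_add hy]; ring_nf
  have key : x ^ (1 - α) ≤ y ^ (1 - α) * ((1 - α) * (x / y) + α) := by
    calc x ^ (1 - α) = (x / y) ^ (1 - α) * y ^ (1 - α) := by
          rw [Real.div_rpow hx hy.le]; field_simp
      _ ≤ ((1 - α) * (x / y) + α) * y ^ (1 - α) :=
          mul_le_mul_of_nonneg_right hgm hy1.le
      _ = y ^ (1 - α) * ((1 - α) * (x / y) + α) := by ring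
  refine key.trans (le_of_eq ?_)
  rw [hsplit]; field_simp; ring

/-- ODE comparison for the extinction estimate: if `p − 1 < q`, `μ > 0`, and
`v : [0,∞) → [0,∞)` is continuous with `v(0) > 0` and satisfies
`v(t₂) − v(t₁) ≤ −μ ∫_{t₁}^{t₂} v(τ)^(p/(q+1)) dτ` for all `0 ≤ t₁ ≤ t₂`, then
`v(t) ≤ v(0) [1 − (μ(q+1−p)/((q+1) v(0)^((q+1−p)/(q+1)))) t]₊^((q+1)/(q+1−p))` for all `t ≥ 0`. -/
theorem ode_comparison_extinction (p q μ : ℝ) (hp : 1 < p) (hq : 0 < q) (hpq : p - 1 < q)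
    (hμ : 0 < μ) (v : ℝ → ℝ)
    (hv_cont : ContinuousOn v (Set.Ici 0))
    (hv_nonneg : ∀ t ∈ Set.Ici (0 : ℝ), 0 ≤ v t)
    (hv0 : 0 < v 0)
    (hineq : ∀ t₁ t₂ : ℝ, 0 ≤ t₁ → t₁ ≤ t₂ →
      v t₂ - v t₁ ≤ -μ * ∫ τ in t₁..t₂, v τ ^ (p / (q + 1))) :
    ∀ t : ℝ, 0 ≤ t →
      v t ≤ v 0 *
        (max (1 - μ * (q + 1 - p) / ((q + 1) * v 0 ^ ((q + 1 - p) / (q + 1))) * t) 0) ^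
          ((q + 1) / (q + 1 - p)) := by
  have hq1 : (0:ℝ) < q + 1 := by linarith
  set α := p / (q + 1) with hαdef
  have hα0 : 0 < α := div_pos (by linarith) hq1
  have hα1 : α < 1 := (div_lt_one hq1).2 (by linarith)
  have hβ : (q + 1 - p) / (q + 1) = 1 - α := by rw [hαdef]; field_simp
  have hvτ : ∀ τ : ℝ, 0 ≤ τ → 0 ≤ v τ ^ α := fun τ hτ => Real.rpow_nonneg (hv_nonneg τ hτ) _
  -- monotonicity
  have hmono : ∀ t₁ t₂ : ℝ, 0 ≤ t₁ → t₁ ≤ t₂ → v t₂ ≤ v t₁ := by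
    intro t₁ t₂ h1 h12
    have h := hineq t₁ t₂ h1 h12
    have hI : 0 ≤ ∫ τ in t₁..t₂, v τ ^ α :=
      intervalIntegral.integral_nonneg h12 (fun u hu => hvτ u (le_trans h1 hu.1))
    nlinarith
  -- integral lower bound
  have hIlow : ∀ t₁ t₂ : ℝ, 0 ≤ t₁ → t₁ ≤ t₂ →
      (t₂ - t₁) * v t₂ ^ α ≤ ∫ τ in t₁..t₂, v τ ^ α := by
    intro t₁ t₂ h1 h12
    have hint : IntervalIntegrable (fun τ => v τ ^ α) MeasureTheory.volume t₁ t₂ := by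
      apply ContinuousOn.intervalIntegrable
      apply ContinuousOn.rpow_const
      · exact hv_cont.mono (by rw [Set.uIcc_of_le h12]; intro x hx; exact le_trans h1 hx.1)
      · intro x hx; right; exact hα0.le
    have hm := intervalIntegral.integral_mono_on h12 intervalIntegrable_const hint
      (fun u hu => Real.rpow_le_rpow (hv_nonneg t₂ (le_trans (le_trans h1 hu.1) hu.2))
        (hmono u t₂ (le_trans h1 hu.1) hu.2) hα0.le)
    simpa using hm
  -- one-step differential inequality
  have hstep : ∀ ε t₁ t₂ : ℝ, 0 < ε → 0 ≤ t₁ → t₁ ≤ t₂ → 0 < v t₂ →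
      (1 - ε) * v t₁ ≤ v t₂ → 1 - ε > 0 →
      v t₂ ^ (1 - α) ≤ v t₁ ^ (1 - α) - μ * (1 - α) * (1 - ε) * (t₂ - t₁) := by
    intro ε t₁ t₂ hε h1 h12 hx hratio hε1
    have hy : 0 < v t₁ := lt_of_lt_of_le hx (hmono t₁ t₂ h1 h12)
    have hx0 : 0 ≤ v t₂ := hx.le
    have hct := concave_tangent (x := v t₂) (y := v t₁) hy hx0 hα0 hα1
    have hdiff : v t₂ - v t₁ ≤ -μ * ((t₂ - t₁) * v t₂ ^ α) := by
      have := hineq t₁ t₂ h1 h12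
      have h2 := hIlow t₁ t₂ h1 h12
      nlinarith
    have hc0 : 0 ≤ (1 - α) * v t₁ ^ (-α) := mul_nonneg (by linarith) (Real.rpow_nonneg hy.le _)
    have key : v t₂ ^ (1 - α) ≤ v t₁ ^ (1 - α)
        - μ * (1 - α) * (t₂ - t₁) * (v t₂ ^ α * v t₁ ^ (-α)) := by
      have := mul_le_mul_of_nonneg_left hdiff hc0
      nlinarith [hct]
    refine key.trans ?_
    have hrpow : (1 - ε) ≤ v t₂ ^ α * v t₁ ^ (-α) := by
      have hquot : v t₂ ^ α * v t₁ ^ (-α) = (v t₂ / v t₁) ^ α := by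
        rw [Real.div_rpow hx0 hy.le, Real.rpow_neg hy.le, div_eq_mul_inv]
      have hr1 : (1 - ε) ≤ v t₂ / v t₁ := (le_div_iff₀ hy).2 (by linarith [hratio])
      have h2 : (1 - ε) ^ (1:ℝ) ≤ (1 - ε) ^ α := by
        rcases le_or_gt (v t₂ / v t₁) 1 with hle | hgt
        · exact Real.rpow_le_rpow_of_exponent_ge hε1 (by linarith [hr1, hle] : (1:ℝ) - ε ≤ 1) hα1.le
        · exact Real.rpow_le_rpow_of_exponent_ge hε1 (by nlinarith [div_le_one_of_le₀ (hmono t₁ t₂ h1 h12) hy.le] : (1:ℝ) - ε ≤ 1) hα1.le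
      rw [Real.rpow_one] at h2
      calc (1 - ε) ≤ (1 - ε) ^ α := h2
        _ ≤ (v t₂ / v t₁) ^ α := Real.rpow_le_rpow hε1.le hr1 hα0.le
        _ = v t₂ ^ α * v t₁ ^ (-α) := hquot.symm
    nlinarith [mul_le_mul_of_nonneg_left hrpow
      (mul_nonneg (mul_nonneg hμ.le (show (0:ℝ) ≤ 1 - α by linarith)) (show (0:ℝ) ≤ t₂ - t₁ by linarith))]
  -- main claim: decay of v^(1-α)
  have hclaim : ∀ t : ℝ, 0 < t → 0 < v t →
      v t ^ (1 - α) ≤ v 0 ^ (1 - α) - μ * (1 - α) * t := by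
    intro t ht hvt
    have heps : ∀ ε : ℝ, 0 < ε → ε < 1 →
        v t ^ (1 - α) ≤ v 0 ^ (1 - α) - μ * (1 - α) * (1 - ε) * t := by
      intro ε hε hε1
      set m := v t with hm
      have hεm : 0 < ε * m := by positivity
      have hUC : UniformContinuousOn v (Set.Icc 0 t) :=
        (isCompact_Icc).uniformContinuousOn_of_continuous
          (hv_cont.mono (fun x hx => hx.1))
      obtain ⟨δ, hδ, hδ'⟩ := Metric.uniformContinuousOn_iff.mp hUC (ε * m) hεm
      obtain ⟨n, hn⟩ := exists_nat_gt (t / δ)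
      have hn0 : 0 < (n:ℝ) := lt_of_le_of_lt (by positivity) hn
      set h := t / n with hhdef
      have hh0 : 0 < h := div_pos ht hn0
      have hhδ : h < δ := by
        rw [hhdef, div_lt_iff₀ hn0]
        calc t = (t / δ) * δ := by field_simp
          _ < n * δ := by exact mul_lt_mul_of_pos_right hn hδ
          _ = δ * n := by ring
      have hmem : ∀ i : ℕ, i ≤ n → (i : ℝ) * h ∈ Set.Icc (0:ℝ) t := by
        intro i hi
        constructor
        · positivity
        · rw [hhdef]
          rw [mul_div_assoc'] at *
          rw [div_le_iff₀ hn0]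
          have : (i:ℝ) ≤ n := Nat.cast_le.2 hi
          nlinarith
      have hind : ∀ i : ℕ, i ≤ n →
          v ((i:ℝ) * h) ^ (1 - α) ≤ v 0 ^ (1 - α) - μ * (1 - α) * (1 - ε) * ((i:ℝ) * h) := by
        intro i hi
        induction i with
        | zero => simp
        | succ k ih =>
          have hk : k ≤ n := Nat.le_of_succ_le hi
          have ihk := ih hk
          have hs := hmem k hk
          have hs' := hmem (k+1) hi
          have hgap : ((k:ℝ)+1) * h - (k:ℝ) * h = h := by ring
          have hdist : dist (((k:ℝ)+1) * h) ((k:ℝ) * h) < δ := by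
            rw [Real.dist_eq, show ((k:ℝ)+1) * h - (k:ℝ) * h = h by ring,
              abs_of_pos hh0]
            exact hhδ
          have hsle : (k:ℝ) * h ≤ ((k:ℝ)+1) * h := by nlinarith
          have hcast : ((k+1 : ℕ) : ℝ) = (k:ℝ) + 1 := by push_cast; ring
          rw [hcast] at hs' ⊢
          have hvclose := hδ' _ hs' _ hs hdist
          rw [Real.dist_eq, abs_lt] at hvclose
          have hmle : m ≤ v ((k:ℝ) * h) := hmono _ t hs.1 hs.2
          have hmle' : m ≤ v (((k:ℝ)+1) * h) := hmono _ t hs'.1 hs'.2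
          have hvt2 : 0 < v (((k:ℝ)+1) * h) := lt_of_lt_of_le hvt hmle'
          have hratio : (1 - ε) * v ((k:ℝ) * h) ≤ v (((k:ℝ)+1) * h) := by nlinarith
          have := hstep ε ((k:ℝ) * h) (((k:ℝ)+1) * h) hε hs.1 hsle hvt2 hratio
            (by linarith)
          rw [hgap] at this
          nlinarith
      have hfin := hind n le_rfl
      have hnh : (n:ℝ) * h = t := by rw [hhdef]; field_simp
      rw [hnh] at hfin
      exact hfin
    -- take ε → 0
    by_contra hcon
    push_neg at hcon
    set D := v 0 ^ (1 - α) - v t ^ (1 - α) with hD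
    set B := μ * (1 - α) * t with hB
    have hB0 : 0 < B := mul_pos (mul_pos hμ (by linarith)) ht
    have hDB : D < B := by rw [hD, hB]; linarith
    have hDhalf : B * (1 - (1:ℝ)/2) ≤ D := by
      have := heps (1/2) (by norm_num) (by norm_num)
      rw [hD, hB]; nlinarith
    have hD0 : 0 < D := by nlinarith
    set ε₀ := (B - D) / (2 * B) with hε₀
    have hε₀0 : 0 < ε₀ := by apply div_pos <;> nlinarith
    have hε₀1 : ε₀ < 1 := by rw [hε₀, div_lt_one (by nlinarith)]; nlinarith
    have := heps ε₀ hε₀0 hε₀1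
    have hfinal : B * (1 - ε₀) ≤ D := by rw [hD, hB]; nlinarith
    rw [hε₀] at hfinal
    have : B * (1 - (B - D) / (2*B)) = (B + D)/2 := by field_simp; ring
    nlinarith [hfinal, this]
  -- conclusion
  intro t ht
  rcases eq_or_lt_of_le ht with rfl | htpos
  · simp only [mul_zero, sub_zero]
    rw [max_eq_left zero_le_one, Real.one_rpow, mul_one]
  · rcases le_or_gt (v t) 0 with hvt | hvt
    · have hvt0 : v t = 0 := le_antisymm hvt (hv_nonneg t ht)
      rw [hvt0]
      apply mul_nonneg hv0.le
      exact Real.rpow_nonneg (le_max_right _ _) _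
    · have hcl := hclaim t htpos hvt
      set A := v 0 ^ (1 - α) with hA
      have hA0 : 0 < A := Real.rpow_pos_of_pos hv0 _
      set R := A - μ * (1 - α) * t with hR
      have hG0 : 0 < v t ^ (1 - α) := Real.rpow_pos_of_pos hvt _
      have hR0 : 0 < R := lt_of_lt_of_le hG0 hcl
      have hc : μ * (q + 1 - p) / ((q + 1) * v 0 ^ ((q + 1 - p) / (q + 1))) * t
          = μ * (1 - α) * t / A := by
        have h2 : μ * (q + 1 - p) = μ * (1 - α) * (q + 1) := by
          rw [← hβ]; field_simp
        rw [hβ, ← hA]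
        field_simp
        rw [← hβ]; field_simp
      have h1RA : 1 - μ * (1 - α) * t / A = R / A := by
        rw [hR, sub_div, div_self hA0.ne']
      have hmax : max (1 - μ * (q + 1 - p) / ((q + 1) * v 0 ^ ((q + 1 - p) / (q + 1))) * t) 0
          = R / A := by
        rw [hc, h1RA, max_eq_left (le_of_lt (div_pos hR0 hA0))]
      rw [hmax]
      have he : (q + 1) / (q + 1 - p) = 1 / (1 - α) := by
        rw [← hβ, one_div_div]
      rw [he]
      have hne : (1:ℝ) - α ≠ 0 := by
        intro h; rw [sub_eq_zero] at h; linarith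
      have h1α : (1 - α) * (1 / (1 - α)) = 1 := by
        rw [mul_one_div, div_self hne]
      have hAe : A ^ ((1:ℝ) / (1 - α)) = v 0 := by
        rw [hA, ← Real.rpow_mul hv0.le, h1α, Real.rpow_one]
      have hdiv : (R / A) ^ ((1:ℝ) / (1 - α))
          = R ^ ((1:ℝ) / (1 - α)) / A ^ ((1:ℝ) / (1 - α)) :=
        Real.div_rpow hR0.le hA0.le _
      have hvt_eq : v t = (v t ^ (1 - α)) ^ ((1:ℝ) / (1 - α)) := by
        rw [← Real.rpow_mul hvt.le, h1α, Real.rpow_one]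
      have hineq2 : (v t ^ (1 - α)) ^ ((1:ℝ) / (1 - α)) ≤ R ^ ((1:ℝ) / (1 - α)) :=
        Real.rpow_le_rpow hG0.le hcl (le_of_lt (by apply div_pos one_pos; cases lt_or_ge α 1 with | inl h => linarith | inr h => exact absurd h (not_le.2 hα1)))
      rw [hdiv, hAe]
      calc v t = (v t ^ (1 - α)) ^ ((1:ℝ) / (1 - α)) := hvt_eq
        _ ≤ R ^ ((1:ℝ) / (1 - α)) := hineq2
        _ = v 0 * (R ^ ((1:ℝ) / (1 - α)) / v 0) := by field_simp
end

section
/- (Unbounded explicit solution above the boundedness threshold.) Let N ≥ 2, 1 < p < N, and q > (N(p−1)+p)/(N−p), and let T ∈ ℝ. Set C := [ ((N(q−(p−1)) − pq)/q) · (p/(q−(p−1)))^{p−1} ]^{1/(q−(p−1))} and define u(x,t) := C · (T−t)^{1/(q−(p−1))} · ‖x‖^{−p/(q−(p−1))} for x ∈ ℝᴺ \ {0} and t < T. Then u is smooth on (ℝᴺ \ {0}) × (−∞, T) and solves the prototype doubly non-linear equation classically at every such point, i.e. ∂_t(u^q)(x,t) = div(‖∇u‖^{p−2}∇u)(x,t)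 for all x ≠ 0, t < T. -/
open Real InnerProductSpace Filter

variable {F : Type*} [NormedAddCommGroup F] [InnerProductSpace ℝ F] [CompleteSpace F]

lemma aux_hasFDerivAt_norm_rpow (K c : ℝ) {y : F} (hy : y ≠ 0) :
    HasFDerivAt (fun z : F => K * ‖z‖ ^ c)
      ((K * c * ‖y‖ ^ (c - 2)) • (InnerProductSpace.toDual ℝ F y : F →L[ℝ] ℝ)) y := by
  have hny : (0:ℝ) < ‖y‖ := norm_pos_iff.mpr hy
  have hinner : ⟪y, y⟫_ℝ ≠ 0 := by
    rw [real_inner_self_eq_norm_sq]; positivity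
  have h1 : HasFDerivAt (fun z : F => ⟪z, z⟫_ℝ)
      ((fderivInnerCLM ℝ (y, y)).comp ((ContinuousLinearMap.id ℝ F).prod
        (ContinuousLinearMap.id ℝ F))) y :=
    (hasFDerivAt_id y).inner ℝ (hasFDerivAt_id y)
  have h2 : HasDerivAt (fun r : ℝ => r ^ (c/2)) (c/2 * ⟪y, y⟫_ℝ ^ (c/2 - 1)) ⟪y, y⟫_ℝ :=
    Real.hasDerivAt_rpow_const (Or.inl hinner)
  have h3' : HasFDerivAt ((fun r : ℝ => r ^ (c/2)) ∘ (fun z : F => ⟪z, z⟫_ℝ))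
      ((c/2 * ⟪y, y⟫_ℝ ^ (c/2 - 1)) • ((fderivInnerCLM ℝ (y, y)).comp
        ((ContinuousLinearMap.id ℝ F).prod (ContinuousLinearMap.id ℝ F)))) y :=
    HasDerivAt.comp_hasFDerivAt (f := fun z : F => ⟪z, z⟫_ℝ) y h2 h1
  have h3 := h3'.const_mul K
  have hfun : (fun z : F => K * ⟪z, z⟫_ℝ ^ (c/2)) = fun z : F => K * ‖z‖ ^ c := by
    funext z
    rw [real_inner_self_eq_norm_sq, ← Real.rpow_natCast ‖z‖ 2, ← Real.rpow_mul (norm_nonneg z)]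
    congr 1
    push_cast; ring
  simp only [Function.comp_def] at h3
  rw [hfun] at h3
  refine h3.congr_fderiv (Eq.symm ?_)
  ext h
  simp only [ContinuousLinearMap.coe_smul', Pi.smul_apply, InnerProductSpace.toDual_apply_apply,
    ContinuousLinearMap.coe_comp', Function.comp_apply, ContinuousLinearMap.prod_apply,
    ContinuousLinearMap.coe_id', id_eq, fderivInnerCLM_apply, smul_eq_mul]
  have : ⟪y, y⟫_ℝ ^ (c/2 - 1) = ‖y‖ ^ (c - 2) := by
    rw [real_inner_self_eq_norm_sq, ← Real.rpow_natCast ‖y‖ 2, ← Real.rpow_mul (norm_nonneg y)]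
    congr 1
    push_cast; ring
  rw [real_inner_comm h y, this]
  ring

lemma aux_hasGradientAt (K c : ℝ) {y : F} (hy : y ≠ 0) :
    HasGradientAt (fun z : F => K * ‖z‖ ^ c) ((K * c * ‖y‖ ^ (c - 2)) • y) y := by
  rw [hasGradientAt_iff_hasFDerivAt]
  refine (aux_hasFDerivAt_norm_rpow K c hy).congr_fderiv (Eq.symm ?_)
  ext h
  simp [InnerProductSpace.toDual_apply_apply, real_inner_smul_left]

/-- Unbounded explicit solution above the boundedness threshold: for `N ≥ 2`,
`1 < p < N`, `q > (N(p−1)+p)/(N−p)` and `T ∈ ℝ`, the function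
`u(x,t) = C (T−t)^(1/(q−(p−1))) ‖x‖^(−p/(q−(p−1)))`, with the indicated constant `C`,
is smooth on `(ℝᴺ \ {0}) × (−∞,T)` and solves the prototype doubly non-linear equation
`∂ₜ(u^q) = div(‖∇u‖^(p−2) ∇u)` classically at every such point. -/
theorem explicit_unbounded_solution (N : ℕ) (hN : 2 ≤ N) (p q T C : ℝ)
    (hp : 1 < p) (hpN : p < (N : ℝ))
    (hq : ((N : ℝ) * (p - 1) + p) / ((N : ℝ) - p) < q)
    (hC : C = (((N : ℝ) * (q - (p - 1)) - p * q) / q * (p / (q - (p - 1))) ^ (p - 1)) ^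
        (1 / (q - (p - 1))))
    (u : EuclideanSpace ℝ (Fin N) → ℝ → ℝ)
    (hu : ∀ (x : EuclideanSpace ℝ (Fin N)) (t : ℝ),
      u x t = C * (T - t) ^ (1 / (q - (p - 1))) * ‖x‖ ^ (-(p / (q - (p - 1))))) :
    ContDiffOn ℝ (⊤ : ℕ∞) (fun z : EuclideanSpace ℝ (Fin N) × ℝ => u z.1 z.2)
        {z : EuclideanSpace ℝ (Fin N) × ℝ | z.1 ≠ 0 ∧ z.2 < T} ∧
      ∀ x : EuclideanSpace ℝ (Fin N), x ≠ 0 → ∀ t : ℝ, t < T →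
        DifferentiableAt ℝ (fun s : ℝ => u x s ^ q) t ∧
        DifferentiableAt ℝ
          (fun y => ‖gradient (fun z => u z t) y‖ ^ (p - 2) • gradient (fun z => u z t) y) x ∧
        deriv (fun s : ℝ => u x s ^ q) t =
          ∑ i : Fin N,
            (fderiv ℝ
              (fun y => ‖gradient (fun z => u z t) y‖ ^ (p - 2) • gradient (fun z => u z t) y)
              x (EuclideanSpace.single i 1)) i := by
  have hNp : (0:ℝ) < (N:ℝ) - p := by linarith
  have hq' : (N : ℝ) * (p - 1) + p < q * ((N:ℝ) - p) := by
    rw [div_lt_iff₀ hNp] at hq; linarith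
  have hq0 : 0 < q := by nlinarith
  set r := q - (p - 1) with hrdef
  have hr : 0 < r := by rw [hrdef]; nlinarith
  have hNr : 0 < (N:ℝ) * r - p * q := by rw [hrdef]; nlinarith
  set a := 1 / r with ha
  set b := p / r with hb
  have hb0 : 0 < b := by rw [hb]; positivity
  have hB : 0 < ((N:ℝ) * r - p * q) / q * b ^ (p - 1) := by
    have := Real.rpow_pos_of_pos hb0 (p - 1)
    positivity
  have hC0 : 0 < C := by rw [hC]; exact Real.rpow_pos_of_pos hB _
  have hCr : C ^ r = ((N:ℝ) * r - p * q) / q * b ^ (p - 1) := by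
    rw [hC, ← Real.rpow_mul hB.le, ha, one_div_mul_cancel hr.ne', Real.rpow_one]
  have hufun : (fun z : EuclideanSpace ℝ (Fin N) × ℝ => u z.1 z.2) = fun z : EuclideanSpace ℝ (Fin N) × ℝ => C * (T - z.2) ^ a * ‖z.1‖ ^ (-b) :=
    funext fun z => hu z.1 z.2
  constructor
  · rw [hufun]
    intro z hz
    apply ContDiffAt.contDiffWithinAt
    have h1 : ContDiffAt ℝ (⊤:ℕ∞) (fun z : EuclideanSpace ℝ (Fin N) × ℝ => T - z.2) z :=
      contDiffAt_const.sub contDiffAt_snd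
    have h2 : ContDiffAt ℝ (⊤:ℕ∞) (fun z : EuclideanSpace ℝ (Fin N) × ℝ => ‖z.1‖) z :=
      (contDiffAt_norm ℝ hz.1).comp z contDiffAt_fst
    exact (contDiffAt_const.mul (h1.rpow_const_of_ne (by have := hz.2; exact (sub_pos.mpr this).ne'))).mul
      (h2.rpow_const_of_ne (norm_ne_zero_iff.mpr hz.1))
  · intro x hx t ht
    have hTt : 0 < T - t := sub_pos.mpr ht
    have hx0 : (0:ℝ) < ‖x‖ := norm_pos_iff.mpr hx
    set K := C * (T - t) ^ a with hK
    have hK0 : 0 < K := by rw [hK]; positivity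
    set c : ℝ := -b with hc
    set m : ℝ := (c - 1) * (p - 2) + (c - 2) with hm
    have hspace : (fun z : EuclideanSpace ℝ (Fin N) => u z t) = fun z : EuclideanSpace ℝ (Fin N) => K * ‖z‖ ^ c := by
      funext z; rw [hu z t, hK, hc]
    have hgrad : ∀ y : EuclideanSpace ℝ (Fin N), y ≠ 0 →
        gradient (fun z : EuclideanSpace ℝ (Fin N) => u z t) y = (K * c * ‖y‖ ^ (c - 2)) • y := by
      intro y hy
      rw [hspace]
      exact (aux_hasGradientAt K c hy).gradient
    set Λ : ℝ := -((K * b) ^ (p - 1)) with hΛ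
    have hflux : ∀ y : EuclideanSpace ℝ (Fin N), y ≠ 0 →
        ‖gradient (fun z : EuclideanSpace ℝ (Fin N) => u z t) y‖ ^ (p - 2) • gradient (fun z : EuclideanSpace ℝ (Fin N) => u z t) y
          = (Λ * ‖y‖ ^ m) • y := by
      intro y hy
      have hy0 : (0:ℝ) < ‖y‖ := norm_pos_iff.mpr hy
      rw [hgrad y hy, smul_smul]
      congr 1
      rw [norm_smul]
      have habs : ‖K * c * ‖y‖ ^ (c - 2)‖ = K * b * ‖y‖ ^ (c - 2) := by
        rw [Real.norm_eq_abs, abs_mul, abs_mul, abs_of_pos hK0,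
          abs_of_pos (Real.rpow_pos_of_pos hy0 _), hc, abs_neg, abs_of_pos hb0]
      rw [habs]
      have h1 : K * b * ‖y‖ ^ (c - 2) * ‖y‖ = (K * b) * ‖y‖ ^ (c - 1) := by
        rw [show c - 1 = (c - 2) + 1 by ring, Real.rpow_add hy0, Real.rpow_one]; ring
      rw [h1, Real.mul_rpow (by positivity) (by positivity), ← Real.rpow_mul (norm_nonneg y)]
      have e1 : ‖y‖ ^ ((c-1)*(p-2)) * ‖y‖ ^ (c-2) = ‖y‖ ^ ((c-1)*(p-2) + (c-2)) :=
        (Real.rpow_add hy0 _ _).symm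
      have e2 : (K*b) ^ (p-2) * (K*c) = -((K*b) ^ (p-1)) := by
        rw [hc, show p - 1 = (p-2) + 1 by ring, Real.rpow_add (mul_pos hK0 hb0), Real.rpow_one]
        ring
      calc (K*b) ^ (p-2) * ‖y‖ ^ ((c-1)*(p-2)) * (K * c * ‖y‖ ^ (c-2))
          = ((K*b) ^ (p-2) * (K*c)) * (‖y‖ ^ ((c-1)*(p-2)) * ‖y‖ ^ (c-2)) := by ring
        _ = Λ * ‖y‖ ^ m := by rw [e1, e2, ← hΛ, ← hm]
    have hev : (fun y : EuclideanSpace ℝ (Fin N) => ‖gradient (fun z : EuclideanSpace ℝ (Fin N) => u z t) y‖ ^ (p - 2) •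
          gradient (fun z : EuclideanSpace ℝ (Fin N) => u z t) y) =ᶠ[nhds x] (fun y : EuclideanSpace ℝ (Fin N) => (Λ * ‖y‖ ^ m) • y) := by
      filter_upwards [isOpen_compl_singleton.mem_nhds (by simpa using hx)] with y hy
      exact hflux y (by simpa using hy)
    have hG : HasFDerivAt (fun y : EuclideanSpace ℝ (Fin N) => (Λ * ‖y‖ ^ m) • y)
        ((Λ * ‖x‖ ^ m) • ContinuousLinearMap.id ℝ (EuclideanSpace ℝ (Fin N)) +
          ((Λ * m * ‖x‖ ^ (m - 2)) • (InnerProductSpace.toDual ℝ (EuclideanSpace ℝ (Fin N)) x : EuclideanSpace ℝ (Fin N) →L[ℝ] ℝ)).smulRight x)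
        x :=
      (aux_hasFDerivAt_norm_rpow Λ m hx).smul (hasFDerivAt_id x)
    -- time derivative
    set A := C ^ q * ‖x‖ ^ (c * q) with hA
    have h1T : HasDerivAt (fun s : ℝ => T - s) (-1) t := by
      simpa using (hasDerivAt_id t).const_sub T
    have htd : HasDerivAt (fun s : ℝ => u x s ^ q)
        (A * (a * q * (T - t) ^ (a * q - 1) * (-1))) t := by
      have h2 := (h1T.rpow_const (p := a * q) (Or.inl hTt.ne')).const_mul A
      have h2' : HasDerivAt (fun s : ℝ => A * (T - s) ^ (a * q))
          (A * (a * q * (T - t) ^ (a * q - 1) * (-1))) t := by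
        exact h2.congr_deriv (by ring)
      apply h2'.congr_of_eventuallyEq
      filter_upwards [Iio_mem_nhds ht] with s hs
      have hTs : (0:ℝ) < T - s := sub_pos.mpr hs
      rw [hu x s, hA]
      rw [Real.mul_rpow (by positivity) (Real.rpow_nonneg (norm_nonneg x) _),
        Real.mul_rpow hC0.le (Real.rpow_nonneg hTs.le _),
        ← Real.rpow_mul hTs.le, ← Real.rpow_mul (norm_nonneg x)]
      ring
    -- divergence computation
    have hdiv : ∑ i : Fin N, (((Λ * ‖x‖ ^ m) • ContinuousLinearMap.id ℝ (EuclideanSpace ℝ (Fin N)) +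
          ((Λ * m * ‖x‖ ^ (m - 2)) • (InnerProductSpace.toDual ℝ (EuclideanSpace ℝ (Fin N)) x : EuclideanSpace ℝ (Fin N) →L[ℝ] ℝ)).smulRight x)
          (EuclideanSpace.single i 1)) i = Λ * ((N:ℝ) + m) * ‖x‖ ^ m := by
      have hsum : ∑ i : Fin N, x i * x i = ‖x‖ ^ (2:ℕ) := by
        rw [← real_inner_self_eq_norm_sq]
        simp only [PiLp.inner_apply, RCLike.inner_apply, conj_trivial]
      have step : ∀ i : Fin N, (((Λ * ‖x‖ ^ m) • ContinuousLinearMap.id ℝ (EuclideanSpace ℝ (Fin N)) +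
          ((Λ * m * ‖x‖ ^ (m - 2)) • (InnerProductSpace.toDual ℝ (EuclideanSpace ℝ (Fin N)) x : EuclideanSpace ℝ (Fin N) →L[ℝ] ℝ)).smulRight x)
          (EuclideanSpace.single i 1)) i
          = Λ * ‖x‖ ^ m + Λ * m * ‖x‖ ^ (m - 2) * (x i * x i) := by
        intro i
        simp only [ContinuousLinearMap.add_apply, ContinuousLinearMap.smul_apply,
          ContinuousLinearMap.id_apply, ContinuousLinearMap.smulRight_apply,
          InnerProductSpace.toDual_apply_apply, PiLp.add_apply, PiLp.smul_apply, smul_eq_mul,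
          EuclideanSpace.single_apply, EuclideanSpace.inner_single_right, conj_trivial]
        simp
        ring
      rw [Finset.sum_congr rfl fun i _ => step i, Finset.sum_add_distrib,
        Finset.sum_const, ← Finset.mul_sum, hsum]
      have : ‖x‖ ^ (m - 2) * ‖x‖ ^ (2:ℕ) = ‖x‖ ^ m := by
        rw [← Real.rpow_natCast ‖x‖ 2, ← Real.rpow_add hx0]
        congr 1; push_cast; ring
      simp only [Finset.card_univ, Fintype.card_fin, nsmul_eq_mul]
      rw [mul_assoc (Λ * m), this]
      ring
    refine ⟨htd.differentiableAt, hev.differentiableAt_iff.mpr hG.differentiableAt, ?_⟩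
    rw [htd.deriv, hev.fderiv_eq, hG.fderiv, hdiv]
    -- final scalar identity
    have e1 : ‖x‖ ^ (c * q) = ‖x‖ ^ m := by
      congr 1
      rw [hm, hc, hb, hrdef]
      have hr' : q - (p - 1) ≠ 0 := hr.ne'
      field_simp
      ring
    have e2 : (K * b) ^ (p - 1) = C ^ (p - 1) * (T - t) ^ (a * q - 1) * b ^ (p - 1) := by
      rw [hK, Real.mul_rpow (by positivity) hb0.le,
        Real.mul_rpow hC0.le (Real.rpow_nonneg hTt.le _), ← Real.rpow_mul hTt.le]
      congr 2
      rw [ha, hrdef]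
      field_simp
      congr 1
      have hr' : q - (p - 1) ≠ 0 := hr.ne'
      field_simp
      ring
    have e3 : C ^ q = C ^ (p - 1) * C ^ r := by
      rw [← Real.rpow_add hC0]
      congr 1
      rw [hrdef]; ring
    have key0 : ((N:ℝ) * r - p * q) / q * q / r = (N:ℝ) + m := by
      rw [hm, hc, hb, hrdef]
      have hr' : q - (p - 1) ≠ 0 := hr.ne'
      field_simp
      ring
    rw [hA, e1, e3, hCr, hΛ, e2, ha]
    linear_combination (-(C ^ (p-1) * (T - t) ^ (1/r * q - 1) * ‖x‖ ^ m * b ^ (p-1))) * key0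
end

section
/- (Explicit source-type solution for q = p−1.) Let N ≥ 1, p > 1 and C > 0, and define u(x,t) := C · t^{−N/(p(p−1))} · exp( −((p−1)/p) · (‖x‖^p/(p t))^{1/(p−1)} ) for x ∈ ℝᴺ and t > 0. Then u is smooth on (ℝᴺ \ {0}) × (0, ∞) and solves the prototype doubly non-linear equation with q = p−1 classically at every such point, i.e. ∂_t(u^{p−1})(x,t) = div(‖∇u‖^{p−2}∇u)(x,t) for all x ≠ 0, t > 0. -/
open Real

section Aux

variable {F : Type*} [NormedAddCommGroup F] [InnerProductSpace ℝ F] [CompleteSpace F]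

lemma radial_hasGradientAt (a l d : ℝ) (x : F) (hx : x ≠ 0) :
    HasGradientAt (fun y : F => a * Real.exp (-l * ((‖y‖ ^ 2 : ℝ) ^ d)))
      ((a * Real.exp (-l * ((‖x‖ ^ 2 : ℝ) ^ d)) * (-l) * (d * (‖x‖ ^ 2 : ℝ) ^ (d - 1)) * 2) • x)
      x := by
  have hs : (‖x‖ ^ 2 : ℝ) ≠ 0 := pow_ne_zero _ (norm_ne_zero_iff.mpr hx)
  have h1 : HasFDerivAt (fun y : F => (‖y‖ ^ 2 : ℝ)) (2 • innerSL ℝ x) x :=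
    (hasStrictFDerivAt_norm_sq x).hasFDerivAt
  have h2 := h1.rpow_const (p := d) (Or.inl hs)
  have h3 := h2.const_mul (-l)
  have h4 := h3.exp
  have h5 := h4.const_mul a
  rw [hasGradientAt_iff_hasFDerivAt]
  refine h5.congr_fderiv ?_
  ext v
  simp [real_inner_smul_left]
  ring

omit [CompleteSpace F] in
lemma flux_hasFDerivAt (b l d : ℝ) (x : F) (hx : x ≠ 0) :
    HasFDerivAt (fun y : F => (b * Real.exp (-l * ((‖y‖ ^ 2 : ℝ) ^ d))) • y)
      ((b * Real.exp (-l * ((‖x‖ ^ 2 : ℝ) ^ d))) • ContinuousLinearMap.id ℝ F +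
        ((b * Real.exp (-l * ((‖x‖ ^ 2 : ℝ) ^ d)) * (-l) * (d * (‖x‖ ^ 2 : ℝ) ^ (d - 1)) * 2) •
          innerSL ℝ x).smulRight x) x := by
  have hs : (‖x‖ ^ 2 : ℝ) ≠ 0 := pow_ne_zero _ (norm_ne_zero_iff.mpr hx)
  have h1 : HasFDerivAt (fun y : F => (‖y‖ ^ 2 : ℝ)) (2 • innerSL ℝ x) x :=
    (hasStrictFDerivAt_norm_sq x).hasFDerivAt
  have h5 := (((h1.rpow_const (p := d) (Or.inl hs)).const_mul (-l)).exp.const_mul b).smul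
    (hasFDerivAt_id x)
  refine h5.congr_fderiv ?_
  ext v
  simp [real_inner_smul_left]
  ring_nf

end Aux

lemma flux_div_sum {N : ℕ} (b l d : ℝ) (x : EuclideanSpace ℝ (Fin N)) (hx : x ≠ 0) :
    ∑ i : Fin N,
      (fderiv ℝ (fun y : EuclideanSpace ℝ (Fin N) =>
          (b * Real.exp (-l * ((‖y‖ ^ 2 : ℝ) ^ d))) • y) x (EuclideanSpace.single i 1)) i =
      (N : ℝ) * (b * Real.exp (-l * ((‖x‖ ^ 2 : ℝ) ^ d))) +
        (b * Real.exp (-l * ((‖x‖ ^ 2 : ℝ) ^ d)) * (-l) * (d * (‖x‖ ^ 2 : ℝ) ^ (d - 1)) * 2) *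
          (‖x‖ ^ 2 : ℝ) := by
  rw [(flux_hasFDerivAt b l d x hx).fderiv]
  have hnorm : (‖x‖ ^ 2 : ℝ) = ∑ i : Fin N, x i ^ 2 := by
    rw [EuclideanSpace.norm_eq]
    rw [Real.sq_sqrt (by positivity)]
    simp [sq_abs]
  simp only [ContinuousLinearMap.add_apply, ContinuousLinearMap.smul_apply,
    ContinuousLinearMap.id_apply, ContinuousLinearMap.smulRight_apply,
    ContinuousLinearMap.coe_smul', Pi.smul_apply, innerSL_apply_apply]
  simp only [PiLp.add_apply, PiLp.smul_apply, smul_eq_mul]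
  rw [Finset.sum_add_distrib]
  congr 1
  · simp [EuclideanSpace.single_apply, Finset.sum_mul]
  · rw [hnorm, Finset.mul_sum]
    congr 1; ext i
    rw [real_inner_comm, EuclideanSpace.inner_single_left]
    simp; ring

lemma time_hasDerivAt (K e c f R t : ℝ) (ht : t ≠ 0) :
    HasDerivAt (fun s : ℝ => K * s ^ e * Real.exp (-(c * s ^ f) * R))
      (K * (e * t ^ (e - 1)) * Real.exp (-(c * t ^ f) * R) +
        K * t ^ e * (Real.exp (-(c * t ^ f) * R) * (-(c * (f * t ^ (f - 1))) * R))) t := by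
  have h1 := (Real.hasDerivAt_rpow_const (x := t) (p := e) (Or.inl ht)).const_mul K
  have h2 := (((Real.hasDerivAt_rpow_const (x := t) (p := f) (Or.inl ht)).const_mul
    c).neg.mul_const R).exp
  exact h1.mul h2

lemma flux_scalar (p : ℝ) (hp : 1 < p) (c₀ S E : ℝ) (hc : 0 < c₀) (hS : 0 < S) :
    (c₀ * S ^ (p / (2 * (p - 1)) - 1) * Real.exp E * S ^ (1 / 2 : ℝ)) ^ (p - 2) *
      (c₀ * S ^ (p / (2 * (p - 1)) - 1) * Real.exp E) =
    c₀ ^ (p - 1) * Real.exp ((p - 1) * E) := by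
  have hp1 : (0:ℝ) < p - 1 := by linarith
  set d := p / (2 * (p - 1)) with hd
  have hSd : (0:ℝ) < S ^ (d - 1) := Real.rpow_pos_of_pos hS _
  have hh : (0:ℝ) < c₀ * S ^ (d - 1) * Real.exp E := by positivity
  rw [Real.mul_rpow hh.le (Real.rpow_pos_of_pos hS _).le]
  rw [← Real.rpow_mul hS.le]
  set h := c₀ * S ^ (d - 1) * Real.exp E with hh'
  have e21 : p - 2 + 1 = p - 1 := by ring
  rw [mul_right_comm, ← Real.rpow_add_one hh.ne', e21]
  rw [hh', Real.mul_rpow (by positivity) (Real.exp_pos E).le,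
    Real.mul_rpow hc.le hSd.le, ← Real.rpow_mul hS.le, ← Real.exp_mul]
  have he : (d - 1) * (p - 1) + 1 / 2 * (p - 2) = 0 := by
    rw [hd]; field_simp; ring
  have expand : c₀ ^ (p-1) * S ^ ((d-1)*(p-1)) * Real.exp (E * (p-1)) * S ^ (1/2 * (p-2))
      = c₀ ^ (p-1) * Real.exp (E * (p-1)) * (S ^ ((d-1)*(p-1)) * S ^ (1/2*(p-2))) := by ring
  rw [expand, ← Real.rpow_add hS, he, Real.rpow_zero, mul_one, mul_comm E (p-1)]

lemma final_identity (Nr p : ℝ) (hp : 1 < p) (K Exp T0 T1 T2 T3 Q1 Q S c2 : ℝ)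
    (h1 : T0 * T3 = T1 * T2) (h2 : Q1 * S = Q) :
    K * (-(Nr / p) * T1) * Exp +
      K * T0 * (Exp * (-(c2 * (-(1 / (p - 1)) * T3)) * Q)) =
    Nr * (-(K * T1 / p) * Exp) +
      (-(K * T1 / p) * Exp * (-(c2 * T2)) * (p / (2 * (p - 1)) * Q1) * 2) * S := by
  have hp0 : (0:ℝ) < p := by linarith
  have hp1 : (0:ℝ) < p - 1 := by linarith
  have expand2 : (-(K * T1 / p) * Exp * (-(c2 * T2)) * (p / (2 * (p - 1)) * Q1) * 2) * S
      = K * T1 * Exp * c2 * T2 * (Q1 * S) / (p - 1) := by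
    field_simp
  rw [expand2, h2]
  have expand1 : K * T0 * (Exp * (-(c2 * (-(1 / (p - 1)) * T3)) * Q))
      = K * (T0 * T3) * Exp * c2 * Q / (p - 1) := by
    field_simp
  rw [expand1, h1]
  field_simp
/-- Explicit source-type solution for `q = p−1`: for `N ≥ 1`, `p > 1`, `C > 0`, the function
`u(x,t) = C t^(−N/(p(p−1))) exp(−((p−1)/p)(‖x‖^p/(pt))^(1/(p−1)))` is smooth on
`(ℝᴺ \ {0}) × (0,∞)` and solves the prototype doubly non-linear equation with `q = p−1`
classically at every such point: `∂ₜ(u^(p−1)) = div(‖∇u‖^(p−2) ∇u)`. -/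
theorem explicit_source_type_solution (N : ℕ) (hN : 1 ≤ N) (p C : ℝ) (hp : 1 < p) (hC : 0 < C)
    (u : EuclideanSpace ℝ (Fin N) → ℝ → ℝ)
    (hu : ∀ (x : EuclideanSpace ℝ (Fin N)) (t : ℝ),
      u x t = C * t ^ (-((N : ℝ) / (p * (p - 1)))) *
        Real.exp (-((p - 1) / p) * (‖x‖ ^ p / (p * t)) ^ (1 / (p - 1)))) :
    ContDiffOn ℝ (⊤ : ℕ∞) (fun z : EuclideanSpace ℝ (Fin N) × ℝ => u z.1 z.2)
        {z : EuclideanSpace ℝ (Fin N) × ℝ | z.1 ≠ 0 ∧ 0 < z.2} ∧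
      ∀ x : EuclideanSpace ℝ (Fin N), x ≠ 0 → ∀ t : ℝ, 0 < t →
        DifferentiableAt ℝ (fun s : ℝ => u x s ^ (p - 1)) t ∧
        DifferentiableAt ℝ
          (fun y => ‖gradient (fun z => u z t) y‖ ^ (p - 2) • gradient (fun z => u z t) y) x ∧
        deriv (fun s : ℝ => u x s ^ (p - 1)) t =
          ∑ i : Fin N,
            (fderiv ℝ
              (fun y => ‖gradient (fun z => u z t) y‖ ^ (p - 2) • gradient (fun z => u z t) y)
              x (EuclideanSpace.single i 1)) i := by
  have hp0 : (0:ℝ) < p := by linarith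
  have hp1 : (0:ℝ) < p - 1 := by linarith
  have hκ'pos : (0:ℝ) < (p - 1) / p * p ^ (-(1 / (p - 1))) :=
    mul_pos (div_pos hp1 hp0) (Real.rpow_pos_of_pos hp0 _)
  -- the representation of u in "smooth" form
  have hrep : ∀ (y : EuclideanSpace ℝ (Fin N)) (t : ℝ), 0 < t →
      u y t = C * t ^ (-((N : ℝ) / (p * (p - 1)))) *
        Real.exp (-(((p - 1) / p * p ^ (-(1 / (p - 1)))) * t ^ (-(1 / (p - 1)))) *
          ((‖y‖ ^ 2 : ℝ) ^ (p / (2 * (p - 1))))) := by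
    intro y t ht
    rw [hu]
    congr 2
    have h1 : (‖y‖ ^ p / (p * t)) ^ (1 / (p - 1))
        = (‖y‖ ^ p) ^ (1 / (p - 1)) / (p * t) ^ (1 / (p - 1)) :=
      Real.div_rpow (Real.rpow_nonneg (norm_nonneg y) p) (mul_pos hp0 ht).le _
    have h2 : ((‖y‖ : ℝ) ^ p) ^ (1 / (p - 1)) = ((‖y‖ ^ 2 : ℝ)) ^ (p / (2 * (p - 1))) := by
      rw [← Real.rpow_natCast ‖y‖ 2, ← Real.rpow_mul (norm_nonneg y),
        ← Real.rpow_mul (norm_nonneg y)]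
      congr 1
      push_cast
      field_simp
    have h3 : (p * t) ^ (1 / (p - 1))
        = ((p : ℝ) ^ (-(1 / (p - 1))) * t ^ (-(1 / (p - 1))))⁻¹ := by
      rw [← Real.mul_rpow hp0.le ht.le, ← Real.rpow_neg (mul_pos hp0 ht).le]
      norm_num
    rw [h1, h2, h3]
    have hP := (Real.rpow_pos_of_pos hp0 (-(1 / (p - 1)))).ne'
    have hT := (Real.rpow_pos_of_pos ht (-(1 / (p - 1)))).ne'
    field_simp
  constructor
  · -- smoothness
    apply ContDiffOn.congr (f := fun z : EuclideanSpace ℝ (Fin N) × ℝ =>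
      C * z.2 ^ (-((N : ℝ) / (p * (p - 1)))) *
        Real.exp (-(((p - 1) / p * p ^ (-(1 / (p - 1)))) * z.2 ^ (-(1 / (p - 1)))) *
          ((‖z.1‖ ^ 2 : ℝ) ^ (p / (2 * (p - 1))))))
    · intro z hz
      obtain ⟨hz1, hz2⟩ := hz
      apply ContDiffAt.contDiffWithinAt
      have c1 : ContDiffAt ℝ (⊤ : ℕ∞) (fun z : EuclideanSpace ℝ (Fin N) × ℝ =>
          z.2 ^ (-((N : ℝ) / (p * (p - 1))))) z :=
        contDiff_snd.contDiffAt.rpow_const_of_ne hz2.ne'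
      have c2 : ContDiffAt ℝ (⊤ : ℕ∞) (fun z : EuclideanSpace ℝ (Fin N) × ℝ =>
          z.2 ^ (-(1 / (p - 1)))) z :=
        contDiff_snd.contDiffAt.rpow_const_of_ne hz2.ne'
      have c3 : ContDiffAt ℝ (⊤ : ℕ∞) (fun z : EuclideanSpace ℝ (Fin N) × ℝ =>
          (‖z.1‖ ^ 2 : ℝ) ^ (p / (2 * (p - 1)))) z := by
        apply ContDiffAt.rpow_const_of_ne
        · exact ((contDiff_norm_sq ℝ).comp contDiff_fst).contDiffAt
        · exact pow_ne_zero _ (norm_ne_zero_iff.mpr hz1)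
      exact (contDiffAt_const.mul c1).mul
        ((((contDiffAt_const.mul c2).neg.mul c3).exp))
    · intro z hz
      exact hrep z.1 z.2 hz.2
  · intro x hx t ht
    have hS0 : (0:ℝ) < (‖x‖ ^ 2 : ℝ) := pow_pos (norm_pos_iff.mpr hx) 2
    have hapos : (0:ℝ) < C * t ^ (-((N : ℝ) / (p * (p - 1)))) :=
      mul_pos hC (Real.rpow_pos_of_pos ht _)
    have hlpos : (0:ℝ) < ((p - 1) / p * p ^ (-(1 / (p - 1)))) * t ^ (-(1 / (p - 1))) :=
      mul_pos hκ'pos (Real.rpow_pos_of_pos ht _)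
    have hfun : (fun z => u z t) = fun y : EuclideanSpace ℝ (Fin N) =>
        (C * t ^ (-((N : ℝ) / (p * (p - 1))))) *
          Real.exp (-(((p - 1) / p * p ^ (-(1 / (p - 1)))) * t ^ (-(1 / (p - 1)))) *
            ((‖y‖ ^ 2 : ℝ) ^ (p / (2 * (p - 1))))) :=
      funext fun y => hrep y t ht
    have hgrad : ∀ y : EuclideanSpace ℝ (Fin N), y ≠ 0 →
        gradient (fun z => u z t) y =
          ((C * t ^ (-((N : ℝ) / (p * (p - 1))))) *
            Real.exp (-(((p - 1) / p * p ^ (-(1 / (p - 1)))) * t ^ (-(1 / (p - 1)))) *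
              ((‖y‖ ^ 2 : ℝ) ^ (p / (2 * (p - 1))))) *
            (-(((p - 1) / p * p ^ (-(1 / (p - 1)))) * t ^ (-(1 / (p - 1))))) *
            (p / (2 * (p - 1)) * (‖y‖ ^ 2 : ℝ) ^ (p / (2 * (p - 1)) - 1)) * 2) • y := by
      intro y hy
      rw [hfun]
      exact (radial_hasGradientAt _ _ _ y hy).gradient
    -- the collapsed coefficient
    have hbb : ((C * t ^ (-((N : ℝ) / (p * (p - 1))))) *
          (((p - 1) / p * p ^ (-(1 / (p - 1)))) * t ^ (-(1 / (p - 1)))) * (p / (p - 1)))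
          ^ (p - 1)
        = C ^ (p - 1) * t ^ (-((N : ℝ) / p) - 1) / p := by
      have h11 : (p - 1) / p * (p / (p - 1)) = 1 := by
        field_simp
      have hκm : ((p - 1) / p * p ^ (-(1 / (p - 1))) : ℝ) * (p / (p - 1))
          = p ^ (-(1 / (p - 1))) := by
        rw [mul_right_comm, h11, one_mul]
      have hta : t ^ (-((N : ℝ) / (p * (p - 1)))) * t ^ (-(1 / (p - 1)))
          = t ^ (-((N : ℝ) / (p * (p - 1))) + -(1 / (p - 1))) := (Real.rpow_add ht _ _).symm
      have hc0 : (C * t ^ (-((N : ℝ) / (p * (p - 1))))) *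
            (((p - 1) / p * p ^ (-(1 / (p - 1)))) * t ^ (-(1 / (p - 1)))) * (p / (p - 1))
          = C * p ^ (-(1 / (p - 1))) *
            t ^ (-((N : ℝ) / (p * (p - 1))) + -(1 / (p - 1))) := by
        calc (C * t ^ (-((N : ℝ) / (p * (p - 1))))) *
              (((p - 1) / p * p ^ (-(1 / (p - 1)))) * t ^ (-(1 / (p - 1)))) * (p / (p - 1))
            = C * (((p - 1) / p * p ^ (-(1 / (p - 1)))) * (p / (p - 1))) *
              (t ^ (-((N : ℝ) / (p * (p - 1)))) * t ^ (-(1 / (p - 1)))) := by ring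
          _ = _ := by rw [hκm, hta]
      rw [hc0, Real.mul_rpow (mul_nonneg hC.le (Real.rpow_nonneg hp0.le _))
          (Real.rpow_pos_of_pos ht _).le,
        Real.mul_rpow hC.le (Real.rpow_nonneg hp0.le _),
        ← Real.rpow_mul hp0.le, ← Real.rpow_mul ht.le]
      have hpe : -(1 / (p - 1)) * (p - 1) = -1 := by field_simp
      have hte : (-((N : ℝ) / (p * (p - 1))) + -(1 / (p - 1))) * (p - 1)
          = -((N : ℝ) / p) - 1 := by field_simp; ring
      rw [hpe, hte, Real.rpow_neg_one]
      ring
    -- flux representation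
    have hflux : ∀ y : EuclideanSpace ℝ (Fin N), y ≠ 0 →
        ‖gradient (fun z => u z t) y‖ ^ (p - 2) • gradient (fun z => u z t) y =
          ((-(C ^ (p - 1) * t ^ (-((N : ℝ) / p) - 1) / p)) *
            Real.exp (-(((p - 1) * ((p - 1) / p * p ^ (-(1 / (p - 1))))) *
                t ^ (-(1 / (p - 1)))) *
              ((‖y‖ ^ 2 : ℝ) ^ (p / (2 * (p - 1)))))) • y := by
      intro y hy
      rw [hgrad y hy, norm_smul, smul_smul]
      have hSy : (0:ℝ) < (‖y‖ ^ 2 : ℝ) := pow_pos (norm_pos_iff.mpr hy) 2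
      have h2d : p / (p - 1) = 2 * (p / (2 * (p - 1))) := by field_simp
      set A := C * t ^ (-((N : ℝ) / (p * (p - 1)))) with hA
      set L := ((p - 1) / p * p ^ (-(1 / (p - 1)))) * t ^ (-(1 / (p - 1))) with hL
      set S := (‖y‖ ^ 2 : ℝ) with hS
      set E := -L * S ^ (p / (2 * (p - 1))) with hE
      have hk : A * Real.exp E * (-L) * (p / (2 * (p - 1)) * S ^ (p / (2 * (p - 1)) - 1)) * 2
          = -((A * L * (p / (p - 1))) * S ^ (p / (2 * (p - 1)) - 1) * Real.exp E) := by
        rw [h2d]; ring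
      rw [hk]
      have hc₀pos : (0:ℝ) < A * L * (p / (p - 1)) :=
        mul_pos (mul_pos hapos hlpos) (div_pos hp0 hp1)
      have hnormk : ‖-((A * L * (p / (p - 1))) * S ^ (p / (2 * (p - 1)) - 1) * Real.exp E)‖
          = (A * L * (p / (p - 1))) * S ^ (p / (2 * (p - 1)) - 1) * Real.exp E := by
        rw [Real.norm_eq_abs, abs_neg, abs_of_pos]
        exact mul_pos (mul_pos hc₀pos (Real.rpow_pos_of_pos hSy _)) (Real.exp_pos E)
      rw [hnormk]
      have hny : ‖y‖ = S ^ (1 / 2 : ℝ) := by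
        rw [hS, ← Real.sqrt_eq_rpow, Real.sqrt_sq (norm_nonneg y)]
      rw [hny]
      congr 1
      rw [mul_neg, flux_scalar p hp _ S E hc₀pos hSy, hbb]
      have hearg : (p - 1) * E = -(((p - 1) * ((p - 1) / p * p ^ (-(1 / (p - 1))))) *
          t ^ (-(1 / (p - 1)))) * S ^ (p / (2 * (p - 1))) := by
        rw [hE]; ring
      rw [hearg]
      ring
    -- eventual equality of flux with the nice function
    have hevF : (fun y => ‖gradient (fun z => u z t) y‖ ^ (p - 2) •
          gradient (fun z => u z t) y) =ᶠ[nhds x]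
        (fun y : EuclideanSpace ℝ (Fin N) =>
          ((-(C ^ (p - 1) * t ^ (-((N : ℝ) / p) - 1) / p)) *
            Real.exp (-(((p - 1) * ((p - 1) / p * p ^ (-(1 / (p - 1))))) *
                t ^ (-(1 / (p - 1)))) *
              ((‖y‖ ^ 2 : ℝ) ^ (p / (2 * (p - 1)))))) • y) := by
      filter_upwards [IsOpen.mem_nhds isOpen_compl_singleton hx] with y hy
      exact hflux y hy
    have hdiffF := (hevF.differentiableAt_iff).mpr
      (flux_hasFDerivAt _ _ _ x hx).differentiableAt
    -- time derivative
    have htime : ∀ s : ℝ, 0 < s → u x s ^ (p - 1) =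
        C ^ (p - 1) * s ^ (-((N : ℝ) / p)) *
          Real.exp (-(((p - 1) * ((p - 1) / p * p ^ (-(1 / (p - 1))))) * s ^ (-(1 / (p - 1)))) *
            ((‖x‖ ^ 2 : ℝ) ^ (p / (2 * (p - 1))))) := by
      intro s hs
      rw [hrep x s hs,
        Real.mul_rpow (mul_nonneg hC.le (Real.rpow_nonneg hs.le _)) (Real.exp_pos _).le,
        Real.mul_rpow hC.le (Real.rpow_nonneg hs.le _),
        ← Real.rpow_mul hs.le, ← Real.exp_mul]
      have hαe : -((N : ℝ) / (p * (p - 1))) * (p - 1) = -((N : ℝ) / p) := by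
        field_simp
      have hexp : -(((p - 1) / p * p ^ (-(1 / (p - 1)))) * s ^ (-(1 / (p - 1)))) *
            ((‖x‖ ^ 2 : ℝ) ^ (p / (2 * (p - 1)))) * (p - 1)
          = -(((p - 1) * ((p - 1) / p * p ^ (-(1 / (p - 1))))) * s ^ (-(1 / (p - 1)))) *
            ((‖x‖ ^ 2 : ℝ) ^ (p / (2 * (p - 1)))) := by ring
      rw [hαe, hexp]
    have hevT : (fun s : ℝ => u x s ^ (p - 1)) =ᶠ[nhds t]
        (fun s : ℝ => C ^ (p - 1) * s ^ (-((N : ℝ) / p)) *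
          Real.exp (-(((p - 1) * ((p - 1) / p * p ^ (-(1 / (p - 1))))) * s ^ (-(1 / (p - 1)))) *
            ((‖x‖ ^ 2 : ℝ) ^ (p / (2 * (p - 1)))))) := by
      filter_upwards [eventually_gt_nhds ht] with s hs
      exact htime s hs
    have hd : HasDerivAt (fun s : ℝ => u x s ^ (p - 1))
        (C ^ (p - 1) * (-((N : ℝ) / p) * t ^ (-((N : ℝ) / p) - 1)) *
            Real.exp (-((((p - 1) * ((p - 1) / p * p ^ (-(1 / (p - 1)))))) * t ^ (-(1 / (p - 1)))) *
              ((‖x‖ ^ 2 : ℝ) ^ (p / (2 * (p - 1))))) +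
          C ^ (p - 1) * t ^ (-((N : ℝ) / p)) *
            (Real.exp (-((((p - 1) * ((p - 1) / p * p ^ (-(1 / (p - 1)))))) *
                t ^ (-(1 / (p - 1)))) * ((‖x‖ ^ 2 : ℝ) ^ (p / (2 * (p - 1))))) *
              (-((((p - 1) * ((p - 1) / p * p ^ (-(1 / (p - 1)))))) *
                (-(1 / (p - 1)) * t ^ (-(1 / (p - 1)) - 1))) *
                ((‖x‖ ^ 2 : ℝ) ^ (p / (2 * (p - 1))))))) t :=
      (time_hasDerivAt (C ^ (p - 1)) (-((N : ℝ) / p))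
        ((p - 1) * ((p - 1) / p * p ^ (-(1 / (p - 1))))) (-(1 / (p - 1)))
        ((‖x‖ ^ 2 : ℝ) ^ (p / (2 * (p - 1)))) t ht.ne').congr_of_eventuallyEq hevT
    refine ⟨hd.differentiableAt, hdiffF, ?_⟩
    rw [hd.deriv, hevF.fderiv_eq, flux_div_sum _ _ _ x hx]
    -- final scalar identity
    have h1 : t ^ (-((N : ℝ) / p)) * t ^ (-(1 / (p - 1)) - 1)
        = t ^ (-((N : ℝ) / p) - 1) * t ^ (-(1 / (p - 1))) := by
      rw [← Real.rpow_add ht, ← Real.rpow_add ht]; ring_nf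
    have h2 : (‖x‖ ^ 2 : ℝ) ^ (p / (2 * (p - 1)) - 1) * (‖x‖ ^ 2 : ℝ)
        = (‖x‖ ^ 2 : ℝ) ^ (p / (2 * (p - 1))) := by
      rw [← Real.rpow_add_one hS0.ne']
      congr 1; ring
    exact final_identity (N : ℝ) p hp (C ^ (p - 1)) _ _ _ _ _ _ _ _ _ h1 h2
end

section
/- (Explicit two-parameter family of extinguishing solutions beyond the critical exponent.) Let N ≥ 2, 1 < p < N and q > N(p−1)/(N−p), and set λ_q := N(p−1−q) + qp (so λ_q < 0) and a := (q/|λ_q|)^{1/(p−1)} · (q+1−p)/p. Let C > 0 and T ∈ ℝ, and define u(x,t) := (T−t)^{1/(q+1−p)} · ( a ‖x‖^{p/(p−1)} + C (T−t)^{pq/((p−1)λ_q)} )^{−(p−1)/(q+1−p)} for x ∈ ℝᴺ and t < T. Then u is smooth on (ℝᴺ \ {0}) × (−∞, T) and solves the prototype doubly non-linear equation classically at every such point, i.e. ∂_t(u^q)(x,t) = div(‖∇u‖^{p−2}∇u)(x,t) for all x ≠ 0, t < T. -/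
open Real Filter

lemma sq_rpow' {r : ℝ} (hr : 0 ≤ r) (e : ℝ) : (r ^ 2 : ℝ) ^ e = r ^ (2 * e) := by
  rw [← Real.rpow_natCast r 2, ← Real.rpow_mul hr]
  norm_num

lemma radial_hasGradientAt_s18 {n : ℕ} {g : ℝ → ℝ} {g' : ℝ} {y : EuclideanSpace ℝ (Fin n)}
    (hg : HasDerivAt g g' (‖y‖ ^ 2)) :
    HasGradientAt (fun z : EuclideanSpace ℝ (Fin n) => g (‖z‖ ^ 2)) ((2 * g') • y) y := by
  rw [hasGradientAt_iff_hasFDerivAt]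
  have hc := hg.comp_hasFDerivAt y (hasStrictFDerivAt_norm_sq y).hasFDerivAt
  refine hc.congr_fderiv ?_
  ext w
  rw [two_smul]
  simp only [InnerProductSpace.toDual_apply_apply, ContinuousLinearMap.smul_apply,
    ContinuousLinearMap.add_apply, innerSL_apply_apply, smul_eq_mul, real_inner_smul_left]
  ring

lemma sum_coords {n : ℕ} (x : EuclideanSpace ℝ (Fin n)) (b d : ℝ) :
    ∑ i : Fin n, ((b • ContinuousLinearMap.id ℝ (EuclideanSpace ℝ (Fin n)) +
      (InnerProductSpace.toDual ℝ (EuclideanSpace ℝ (Fin n)) (d • x)).smulRight x)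
      (EuclideanSpace.single i 1)) i = n * b + d * (‖x‖ ^ 2) := by
  have hxx : ∑ i : Fin n, x i * x i = ‖x‖ ^ 2 := by
    rw [EuclideanSpace.norm_eq, Real.sq_sqrt (by positivity)]
    simp [sq]
  have hterm : ∀ i : Fin n, ((b • ContinuousLinearMap.id ℝ (EuclideanSpace ℝ (Fin n)) +
      (InnerProductSpace.toDual ℝ (EuclideanSpace ℝ (Fin n)) (d • x)).smulRight x)
      (EuclideanSpace.single i 1)) i = b + d * (x i * x i) := by
    intro i
    simp only [ContinuousLinearMap.add_apply, ContinuousLinearMap.coe_smul', Pi.smul_apply,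
      ContinuousLinearMap.coe_id', id_eq, ContinuousLinearMap.smulRight_apply,
      InnerProductSpace.toDual_apply_apply, real_inner_smul_left, PiLp.add_apply, PiLp.smul_apply,
      smul_eq_mul]
    have h1 : (EuclideanSpace.single i (1:ℝ)) i = 1 := by
      simp [EuclideanSpace.single_apply]
    have h2 : (inner ℝ x (EuclideanSpace.single i (1:ℝ)) : ℝ) = x i := by
      simp [EuclideanSpace.inner_single_right]
    rw [h1, h2]
    ring
  simp only [hterm]
  rw [Finset.sum_add_distrib, Finset.sum_const, Finset.card_univ, Fintype.card_fin,
    ← Finset.mul_sum, hxx, nsmul_eq_mul]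

set_option maxHeartbeats 2000000 in
/-- Explicit two-parameter family of extinguishing solutions beyond the critical exponent:
for `N ≥ 2`, `1 < p < N`, `q > N(p−1)/(N−p)`, with `λ_q := N(p−1−q)+qp` and
`a := (q/|λ_q|)^(1/(p−1)) (q+1−p)/p`, and for any `C > 0`, `T ∈ ℝ`, the function
`u(x,t) = (T−t)^(1/(q+1−p)) (a‖x‖^(p/(p−1)) + C(T−t)^(pq/((p−1)λ_q)))^(−(p−1)/(q+1−p))`
is smooth on `(ℝᴺ \ {0}) × (−∞,T)` and solves the prototype doubly non-linear equation
classically at every such point: `∂ₜ(u^q) = div(‖∇u‖^(p−2) ∇u)`. -/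
theorem explicit_extinguishing_family (N : ℕ) (hN : 2 ≤ N) (p q C T lamq a : ℝ)
    (hp : 1 < p) (hpN : p < (N : ℝ))
    (hq : (N : ℝ) * (p - 1) / ((N : ℝ) - p) < q)
    (hlam : lamq = (N : ℝ) * (p - 1 - q) + q * p)
    (ha : a = (q / |lamq|) ^ (1 / (p - 1)) * (q + 1 - p) / p)
    (hC : 0 < C)
    (u : EuclideanSpace ℝ (Fin N) → ℝ → ℝ)
    (hu : ∀ (x : EuclideanSpace ℝ (Fin N)) (t : ℝ),
      u x t = (T - t) ^ (1 / (q + 1 - p)) *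
        (a * ‖x‖ ^ (p / (p - 1)) + C * (T - t) ^ (p * q / ((p - 1) * lamq))) ^
          (-((p - 1) / (q + 1 - p)))) :
    ContDiffOn ℝ (⊤ : ℕ∞) (fun z : EuclideanSpace ℝ (Fin N) × ℝ => u z.1 z.2)
        {z : EuclideanSpace ℝ (Fin N) × ℝ | z.1 ≠ 0 ∧ z.2 < T} ∧
      ∀ x : EuclideanSpace ℝ (Fin N), x ≠ 0 → ∀ t : ℝ, t < T →
        DifferentiableAt ℝ (fun s : ℝ => u x s ^ q) t ∧
        DifferentiableAt ℝ
          (fun y => ‖gradient (fun z => u z t) y‖ ^ (p - 2) • gradient (fun z => u z t) y) x ∧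
        deriv (fun s : ℝ => u x s ^ q) t =
          ∑ i : Fin N,
            (fderiv ℝ
              (fun y => ‖gradient (fun z => u z t) y‖ ^ (p - 2) • gradient (fun z => u z t) y)
              x (EuclideanSpace.single i 1)) i := by
  -- basic numerical facts
  have hp1 : (0:ℝ) < p - 1 := by linarith
  have hNp : (0:ℝ) < (N:ℝ) - p := by linarith
  have hq' : (N:ℝ) * (p - 1) < q * ((N:ℝ) - p) := (div_lt_iff₀ hNp).1 hq
  have hq0 : (0:ℝ) < q := by nlinarith
  have hqp : (0:ℝ) < q + 1 - p := by nlinarith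
  have hlam0 : lamq < 0 := by rw [hlam]; nlinarith
  have habs : |lamq| = -lamq := abs_of_neg hlam0
  have ha0 : 0 < a := by
    have h1 : (0:ℝ) < q / |lamq| := div_pos hq0 (abs_pos.2 hlam0.ne)
    have h2 := Real.rpow_pos_of_pos h1 (1 / (p - 1))
    rw [ha]; positivity
  set al := p / (p - 1) with hal
  set be := -((p - 1) / (q + 1 - p)) with hbe
  set ga := 1 / (q + 1 - p) with hga
  set th := p * q / ((p - 1) * lamq) with hth
  have hbe0 : be < 0 := by rw [hbe]; rw [neg_neg_iff_pos]; positivity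
  set ka := (be - 1) * (p - 1) with hka
  set Mt := q / (-lamq) with hMt
  have hMt0 : 0 < Mt := div_pos hq0 (by linarith)
  -- the key rpow constant identity: ((-be) * a * al) ^ (p-1) = Mt
  have hMkey : ((-be) * a * al) ^ (p - 1) = Mt := by
    have h1 : (-be) * a * al = (q / |lamq|) ^ (1 / (p - 1)) := by
      rw [hbe, ha, hal]; field_simp
    have hql : (0:ℝ) ≤ q / |lamq| := le_of_lt (div_pos hq0 (abs_pos.2 hlam0.ne))
    rw [h1, ← Real.rpow_mul hql, one_div, inv_mul_cancel₀ hp1.ne', Real.rpow_one, hMt, habs]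
  -- the scalar coefficient of the gradient
  set cf : ℝ → EuclideanSpace ℝ (Fin N) → ℝ := fun t y =>
    (T - t) ^ ga * be * (a * ‖y‖ ^ al + C * (T - t) ^ th) ^ (be - 1) *
      (a * al * ‖y‖ ^ (al - 2)) with hcf
  -- gradient computation
  have grad_lem : ∀ t : ℝ, t < T → ∀ y : EuclideanSpace ℝ (Fin N), y ≠ 0 →
      HasGradientAt (fun z => u z t) (cf t y • y) y := by
    intro t ht y hy
    have hA : 0 < T - t := sub_pos.2 ht
    have hny : 0 < ‖y‖ := norm_pos_iff.2 hy
    have hr0 : (0:ℝ) < ‖y‖ ^ 2 := by positivity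
    have hsq : ∀ e : ℝ, ((‖y‖:ℝ) ^ 2) ^ e = ‖y‖ ^ (2 * e) := fun e => sq_rpow' (norm_nonneg y) e
    set G : ℝ → ℝ := fun r => (T - t) ^ ga * (a * r ^ (al / 2) + C * (T - t) ^ th) ^ be with hG
    have hfun : (fun z : EuclideanSpace ℝ (Fin N) => u z t) = fun z => G (‖z‖ ^ 2) := by
      funext z
      rw [hu]
      have h2 : ((‖z‖:ℝ) ^ 2) ^ (al / 2) = ‖z‖ ^ al := by
        rw [sq_rpow' (norm_nonneg z)]
        congr 1
        ring
      simp only [hG, h2]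
    have hv : 0 < a * ((‖y‖:ℝ) ^ 2) ^ (al / 2) + C * (T - t) ^ th :=
      add_pos (mul_pos ha0 (Real.rpow_pos_of_pos hr0 _)) (mul_pos hC (Real.rpow_pos_of_pos hA _))
    have h1 : HasDerivAt (fun r : ℝ => a * r ^ (al / 2) + C * (T - t) ^ th)
        (a * ((al / 2) * (‖y‖ ^ 2) ^ (al / 2 - 1))) (‖y‖ ^ 2) :=
      ((Real.hasDerivAt_rpow_const (Or.inl hr0.ne')).const_mul a).add_const _
    have h2 : HasDerivAt G
        ((T - t) ^ ga * (a * (al / 2 * (‖y‖ ^ 2) ^ (al / 2 - 1)) * be *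
          (a * ((‖y‖:ℝ) ^ 2) ^ (al / 2) + C * (T - t) ^ th) ^ (be - 1)))
        (‖y‖ ^ 2) :=
      HasDerivAt.const_mul _ (h1.rpow_const (Or.inl hv.ne'))
    have h3 := radial_hasGradientAt_s18 h2
    rw [hfun]
    convert h3 using 2
    rw [hcf]
    rw [hsq, hsq]
    have e1 : 2 * (al / 2) = al := by ring
    have e2 : 2 * (al / 2 - 1) = al - 2 := by ring
    rw [e1, e2]
    ring
  -- positivity of v
  have hal0 : 0 < al := by rw [hal]; positivity
  have hbe' : 0 < -be := by linarith
  -- flux simplification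
  have flux_eq : ∀ t : ℝ, t < T → ∀ y : EuclideanSpace ℝ (Fin N), y ≠ 0 →
      ‖cf t y • y‖ ^ (p - 2) • (cf t y • y) =
        (-((T - t) ^ (ga * (p - 1)) * Mt * (a * ‖y‖ ^ al + C * (T - t) ^ th) ^ ka)) • y := by
    intro t ht y hy
    have hA : 0 < T - t := sub_pos.2 ht
    have hny : 0 < ‖y‖ := norm_pos_iff.2 hy
    have hv : 0 < a * ‖y‖ ^ al + C * (T - t) ^ th :=
      add_pos (mul_pos ha0 (Real.rpow_pos_of_pos hny _)) (mul_pos hC (Real.rpow_pos_of_pos hA _))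
    have hXpos : 0 < (T - t) ^ ga := Real.rpow_pos_of_pos hA _
    have hYpos : 0 < -be * a * al := mul_pos (mul_pos hbe' ha0) hal0
    have hZpos : 0 < (a * ‖y‖ ^ al + C * (T - t) ^ th) ^ (be - 1) := Real.rpow_pos_of_pos hv _
    have hWpos : 0 < ‖y‖ ^ (al - 2) := Real.rpow_pos_of_pos hny _
    have hmc : -(cf t y) = ((T - t) ^ ga * (-be * a * al)) *
        ((a * ‖y‖ ^ al + C * (T - t) ^ th) ^ (be - 1) * ‖y‖ ^ (al - 2)) := by
      simp only [hcf]; ring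
    have hcpos : 0 < -(cf t y) := by rw [hmc]; positivity
    have hnorm : ‖cf t y • y‖ = (-(cf t y)) * ‖y‖ := by
      rw [norm_smul, Real.norm_eq_abs, abs_of_neg (by linarith : cf t y < 0)]
    rw [hnorm, smul_smul]
    congr 1
    have e1 : ((-(cf t y)) * ‖y‖) ^ (p - 2) = (-(cf t y)) ^ (p - 2) * ‖y‖ ^ (p - 2) :=
      Real.mul_rpow hcpos.le (norm_nonneg y)
    have e2 : (-(cf t y)) ^ (p - 2) * (-(cf t y)) = (-(cf t y)) ^ (p - 1) := by
      rw [← Real.rpow_add_one hcpos.ne']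
      congr 1; ring
    have e3 : (-(cf t y)) ^ (p - 1)
        = (T - t) ^ (ga * (p - 1)) * Mt *
          ((a * ‖y‖ ^ al + C * (T - t) ^ th) ^ ka * ‖y‖ ^ ((al - 2) * (p - 1))) := by
      rw [hmc, Real.mul_rpow (by positivity) (by positivity),
        Real.mul_rpow hXpos.le hYpos.le, Real.mul_rpow hZpos.le hWpos.le,
        ← Real.rpow_mul hA.le, ← Real.rpow_mul hv.le, ← Real.rpow_mul (norm_nonneg y),
        hMkey, ← hka]
    have e4 : ‖y‖ ^ ((al - 2) * (p - 1)) * ‖y‖ ^ (p - 2) = 1 := by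
      rw [← Real.rpow_add hny]
      have h0 : (al - 2) * (p - 1) + (p - 2) = 0 := by rw [hal]; field_simp; ring
      rw [h0, Real.rpow_zero]
    have e5 : ((-(cf t y)) * ‖y‖) ^ (p - 2) * cf t y
        = -(((-(cf t y)) ^ (p - 2) * (-(cf t y))) * ‖y‖ ^ (p - 2)) := by
      rw [e1]; ring
    rw [e5, e2, e3]
    have e6 : (T - t) ^ (ga * (p - 1)) * Mt *
          ((a * ‖y‖ ^ al + C * (T - t) ^ th) ^ ka * ‖y‖ ^ ((al - 2) * (p - 1))) * ‖y‖ ^ (p - 2)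
        = (T - t) ^ (ga * (p - 1)) * Mt * (a * ‖y‖ ^ al + C * (T - t) ^ th) ^ ka *
          (‖y‖ ^ ((al - 2) * (p - 1)) * ‖y‖ ^ (p - 2)) := by ring
    rw [e6, e4, mul_one]
  refine ⟨?_, ?_⟩
  · -- smoothness
    intro z hz
    obtain ⟨hz1, hz2⟩ := hz
    apply ContDiffAt.contDiffWithinAt
    have hA : 0 < T - z.2 := sub_pos.2 hz2
    have hnz : 0 < ‖z.1‖ := norm_pos_iff.2 hz1
    have hfun : (fun w : EuclideanSpace ℝ (Fin N) × ℝ => u w.1 w.2)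
        = fun w => (T - w.2) ^ ga * (a * ‖w.1‖ ^ al + C * (T - w.2) ^ th) ^ be :=
      funext fun w => hu w.1 w.2
    rw [hfun]
    have c0 : ContDiffAt ℝ (⊤ : ℕ∞) (fun w : EuclideanSpace ℝ (Fin N) × ℝ => T - w.2) z :=
      (contDiff_const.sub contDiff_snd).contDiffAt
    have c1 : ContDiffAt ℝ (⊤ : ℕ∞) (fun w : EuclideanSpace ℝ (Fin N) × ℝ => (T - w.2) ^ ga) z :=
      c0.rpow_const_of_ne hA.ne'
    have c2 : ContDiffAt ℝ (⊤ : ℕ∞) (fun w : EuclideanSpace ℝ (Fin N) × ℝ => ‖w.1‖) z :=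
      (contDiffAt_norm ℝ hz1).comp z contDiff_fst.contDiffAt
    have hvz : 0 < a * ‖z.1‖ ^ al + C * (T - z.2) ^ th :=
      add_pos (mul_pos ha0 (Real.rpow_pos_of_pos hnz _)) (mul_pos hC (Real.rpow_pos_of_pos hA _))
    have c3 : ContDiffAt ℝ (⊤ : ℕ∞)
        (fun w : EuclideanSpace ℝ (Fin N) × ℝ => a * ‖w.1‖ ^ al + C * (T - w.2) ^ th) z :=
      (contDiffAt_const.mul (c2.rpow_const_of_ne hnz.ne')).add
        (contDiffAt_const.mul (c0.rpow_const_of_ne hA.ne'))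
    exact c1.mul (c3.rpow_const_of_ne hvz.ne')
  · -- the pointwise PDE
    intro x hx t ht
    have hA : 0 < T - t := sub_pos.2 ht
    have hnx : 0 < ‖x‖ := norm_pos_iff.2 hx
    have hsq : ∀ e : ℝ, ((‖x‖:ℝ) ^ 2) ^ e = ‖x‖ ^ (2 * e) := fun e => sq_rpow' (norm_nonneg x) e
    have hr0 : (0:ℝ) < ‖x‖ ^ 2 := by positivity
    have hvx : 0 < a * ‖x‖ ^ al + C * (T - t) ^ th :=
      add_pos (mul_pos ha0 (Real.rpow_pos_of_pos hnx _)) (mul_pos hC (Real.rpow_pos_of_pos hA _))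
    have hvx2 : 0 < a * ((‖x‖:ℝ) ^ 2) ^ (al / 2) + C * (T - t) ^ th :=
      add_pos (mul_pos ha0 (Real.rpow_pos_of_pos hr0 _)) (mul_pos hC (Real.rpow_pos_of_pos hA _))
    -- the time derivative
    set φ : ℝ → ℝ := fun s =>
      (T - s) ^ (ga * q) * (a * ‖x‖ ^ al + C * (T - s) ^ th) ^ (be * q) with hφ
    have heq : (fun s : ℝ => u x s ^ q) =ᶠ[nhds t] φ := by
      refine Filter.eventually_of_mem (Iio_mem_nhds ht) fun s hs => ?_
      have hAs : 0 < T - s := sub_pos.2 hs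
      have hvs : 0 < a * ‖x‖ ^ al + C * (T - s) ^ th :=
        add_pos (mul_pos ha0 (Real.rpow_pos_of_pos hnx _)) (mul_pos hC (Real.rpow_pos_of_pos hAs _))
      show u x s ^ q = φ s
      rw [hu]
      simp only [hφ]
      rw [Real.mul_rpow (Real.rpow_pos_of_pos hAs _).le (Real.rpow_pos_of_pos hvs _).le,
        ← Real.rpow_mul hAs.le, ← Real.rpow_mul hvs.le]
    have hTs : HasDerivAt (fun s : ℝ => T - s) (-1) t := by
      simpa using (hasDerivAt_id t).const_sub T
    have hd1 : HasDerivAt (fun s : ℝ => (T - s) ^ (ga * q))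
        ((-1) * (ga * q) * (T - t) ^ (ga * q - 1)) t :=
      hTs.rpow_const (Or.inl hA.ne')
    have hdV : HasDerivAt (fun s : ℝ => a * ‖x‖ ^ al + C * (T - s) ^ th)
        (C * ((-1) * th * (T - t) ^ (th - 1))) t :=
      (HasDerivAt.const_mul C (hTs.rpow_const (Or.inl hA.ne'))).const_add (a * ‖x‖ ^ al)
    have hdφ : HasDerivAt φ
        ((-1) * (ga * q) * (T - t) ^ (ga * q - 1) * (a * ‖x‖ ^ al + C * (T - t) ^ th) ^ (be * q) +
          (T - t) ^ (ga * q) * (C * ((-1) * th * (T - t) ^ (th - 1)) * (be * q) *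
            (a * ‖x‖ ^ al + C * (T - t) ^ th) ^ (be * q - 1))) t :=
      hd1.mul (hdV.rpow_const (Or.inl hvx.ne'))
    -- the flux and its derivative
    set H : ℝ → ℝ := fun r =>
      -((T - t) ^ (ga * (p - 1)) * Mt * (a * r ^ (al / 2) + C * (T - t) ^ th) ^ ka) with hH
    have hΨval : ∀ y : EuclideanSpace ℝ (Fin N),
        H (‖y‖ ^ 2) = -((T - t) ^ (ga * (p - 1)) * Mt *
          (a * ‖y‖ ^ al + C * (T - t) ^ th) ^ ka) := by
      intro y
      have h2 : ((‖y‖:ℝ) ^ 2) ^ (al / 2) = ‖y‖ ^ al := by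
        rw [sq_rpow' (norm_nonneg y)]
        congr 1
        ring
      simp only [hH, h2]
    have heΦΨ : (fun y => ‖gradient (fun z => u z t) y‖ ^ (p - 2) •
          gradient (fun z => u z t) y) =ᶠ[nhds x] fun y => H (‖y‖ ^ 2) • y := by
      refine Filter.eventually_of_mem (isOpen_compl_singleton.mem_nhds hx) fun y hy => ?_
      have hy0 : y ≠ 0 := hy
      show ‖gradient (fun z => u z t) y‖ ^ (p - 2) • gradient (fun z => u z t) y
          = H (‖y‖ ^ 2) • y
      rw [(grad_lem t ht y hy0).gradient, flux_eq t ht y hy0, hΨval y]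
    have hHd : HasDerivAt H
        (-((T - t) ^ (ga * (p - 1)) * Mt * (a * (al / 2 * (‖x‖ ^ 2) ^ (al / 2 - 1)) * ka *
          (a * ((‖x‖:ℝ) ^ 2) ^ (al / 2) + C * (T - t) ^ th) ^ (ka - 1)))) (‖x‖ ^ 2) := by
      have h1 : HasDerivAt (fun r : ℝ => a * r ^ (al / 2) + C * (T - t) ^ th)
          (a * ((al / 2) * (‖x‖ ^ 2) ^ (al / 2 - 1))) (‖x‖ ^ 2) :=
        ((Real.hasDerivAt_rpow_const (Or.inl hr0.ne')).const_mul a).add_const _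
      exact (HasDerivAt.const_mul _ (h1.rpow_const (Or.inl hvx2.ne'))).neg
    have hgradH := radial_hasGradientAt_s18 hHd
    have hfd : HasFDerivAt (fun y : EuclideanSpace ℝ (Fin N) => H (‖y‖ ^ 2) • y)
        (H (‖x‖ ^ 2) • ContinuousLinearMap.id ℝ (EuclideanSpace ℝ (Fin N)) +
          (InnerProductSpace.toDual ℝ (EuclideanSpace ℝ (Fin N))
            ((2 * (-((T - t) ^ (ga * (p - 1)) * Mt * (a * (al / 2 * (‖x‖ ^ 2) ^ (al / 2 - 1)) * ka *
              (a * ((‖x‖:ℝ) ^ 2) ^ (al / 2) + C * (T - t) ^ th) ^ (ka - 1))))) • x)).smulRight x) x :=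
      (hasGradientAt_iff_hasFDerivAt.1 hgradH).smul (hasFDerivAt_id x)
    refine ⟨(heq.differentiableAt_iff).2 hdφ.differentiableAt,
      (heΦΨ.differentiableAt_iff).2 hfd.differentiableAt, ?_⟩
    rw [heq.deriv_eq, hdφ.deriv]
    have hfderiv_eq : fderiv ℝ (fun y => ‖gradient (fun z => u z t) y‖ ^ (p - 2) •
        gradient (fun z => u z t) y) x
        = H (‖x‖ ^ 2) • ContinuousLinearMap.id ℝ (EuclideanSpace ℝ (Fin N)) +
          (InnerProductSpace.toDual ℝ (EuclideanSpace ℝ (Fin N))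
            ((2 * (-((T - t) ^ (ga * (p - 1)) * Mt * (a * (al / 2 * (‖x‖ ^ 2) ^ (al / 2 - 1)) * ka *
              (a * ((‖x‖:ℝ) ^ 2) ^ (al / 2) + C * (T - t) ^ th) ^ (ka - 1))))) • x)).smulRight x := by
      rw [heΦΨ.fderiv_eq]
      exact hfd.fderiv
    rw [hfderiv_eq, sum_coords x]
    rw [hΨval x, hsq (al / 2 - 1), hsq (al / 2)]
    have ee1 : 2 * (al / 2 - 1) = al - 2 := by ring
    have ee2 : 2 * (al / 2) = al := by ring
    rw [ee1, ee2]
    -- algebraic identities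
    have hlamne : (N:ℝ) * (p - 1 - q) + q * p ≠ 0 := by rw [← hlam]; exact hlam0.ne
    have e0 : ga * q - 1 = ga * (p - 1) := by
      rw [hga]; field_simp; ring
    have R1 : (T - t) ^ (ga * q - 1) = (T - t) ^ (ga * (p - 1)) := by
      rw [e0]
    have R2 : (T - t) ^ (ga * q) * (T - t) ^ (th - 1)
        = (T - t) ^ (ga * (p - 1)) * (T - t) ^ th := by
      rw [← Real.rpow_add hA, ← Real.rpow_add hA]
      congr 1
      linarith [e0]
    have hbeq : be * q = ka := by rw [hka, hbe]; field_simp; ring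
    have R3 : (a * ‖x‖ ^ al + C * (T - t) ^ th) ^ (be * q)
        = (a * ‖x‖ ^ al + C * (T - t) ^ th) ^ ka := by rw [hbeq]
    have R4 : (a * ‖x‖ ^ al + C * (T - t) ^ th) ^ (be * q - 1)
        = (a * ‖x‖ ^ al + C * (T - t) ^ th) ^ (ka - 1) := by rw [hbeq]
    have R5 : (a * ‖x‖ ^ al + C * (T - t) ^ th) ^ ka
        = (a * ‖x‖ ^ al + C * (T - t) ^ th) ^ (ka - 1) *
          (a * ‖x‖ ^ al + C * (T - t) ^ th) := by
      conv_lhs => rw [show ka = (ka - 1) + 1 by ring]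
      rw [Real.rpow_add_one hvx.ne']
    have R6 : ‖x‖ ^ (al - 2) * (‖x‖:ℝ) ^ (2:ℕ) = ‖x‖ ^ al := by
      rw [← Real.rpow_natCast ‖x‖ 2, ← Real.rpow_add hnx]
      norm_num
    have hkaal : ka * al = -(p * q) / (q + 1 - p) := by
      rw [hka, hbe, hal]
      field_simp
      ring
    have hsum : (N:ℝ) + ka * al = -lamq / (q + 1 - p) := by
      rw [hkaal, hlam, eq_div_iff hqp.ne']
      field_simp
      ring
    have I1 : ga * q = Mt * ((N:ℝ) + ka * al) := by
      rw [hsum, hMt, hga]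
      field_simp [hlam0.ne]
    have I2 : be * q * th = -(Mt * (ka * al)) := by
      rw [hbe, hMt, hkaal, hth]
      field_simp [hlam0.ne]
    linear_combination
      (-(ga * q) * ((a * ‖x‖ ^ al + C * (T - t) ^ th) ^ (be * q))) * R1 +
      (-(ga * q) * ((T - t) ^ (ga * (p - 1)))) * R3 +
      (-(C * th * (be * q)) * ((a * ‖x‖ ^ al + C * (T - t) ^ th) ^ (be * q - 1))) * R2 +
      (-(C * th * (be * q)) * ((T - t) ^ (ga * (p - 1))) * ((T - t) ^ th)) * R4 +
      ((T - t) ^ (ga * (p - 1)) * Mt * a * al * ka *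
        ((a * ‖x‖ ^ al + C * (T - t) ^ th) ^ (ka - 1))) * R6 +
      (-(C * ((T - t) ^ th) * ((a * ‖x‖ ^ al + C * (T - t) ^ th) ^ (ka - 1)) *
        ((T - t) ^ (ga * (p - 1))))) * I2 +
      (-((T - t) ^ (ga * (p - 1)) * Mt * ka * al)) * R5 +
      (-((T - t) ^ (ga * (p - 1)) * ((a * ‖x‖ ^ al + C * (T - t) ^ th) ^ ka))) * I1
end
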